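/- arXiv:1911.12264 — 6 statements merged into one kernel-verified Lean document; each statement's English description precedes it below -/
import Mathlib

section
/- Let T > 0 and α ∈ ℝ. Define A_T(α) = ∫₀^T ∫_ℝ (sin(t·|ξ|))²/ξ² · |ξ|^α dξ dt. Then A_T(α) < ∞ if and only if α ∈ (−1,1), and in that case A_T(α) = 2^{1−α} · C_α · T^{2−α}/(2−α), where C_α = Γ(α)·sin(πα/2)/(1−α) for α ∈ (−1,1)\{0} and C₀ = π/2. -/
/-!
After the substitution `u = t|ξ|` the inner integral equals `2 t^{1-α} I(α)` with
`I(α) = ∫₀^∞ sin²u · u^{α-2} du`, so everything hinges on `I(α)`. Near `0` the integrand is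
`≍ u^α`, which forces `α > -1`. For `α ≥ 1` it dominates `sin²u / u` at infinity, whose integral
diverges because `sin²u` and `cos²u = sin²(u + π/2)` have comparable tails and add up to `1`.
For `α ∈ (-1, 1)` we write `u^{α-2} = Γ(2-α)⁻¹ ∫₀^∞ x^{1-α} e^{-ux} dx`; by Tonelli and the
Laplace transform `∫₀^∞ sin²u e^{-xu} du = 2 / (x (x² + 4))` this gives
`I(α) = 2 Γ(2-α)⁻¹ ∫₀^∞ x^{-α} / (x² + 4) dx`. The last integral is evaluated by the same trick,
with `1 / (x² + b) = ∫₀^∞ e^{-(x² + b)s} ds`, and the reflection formula.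
-/

open MeasureTheory Real Set
open scoped ENNReal

theorem setLIntegral_Ioi_comp_add_right (f : ℝ → ℝ≥0∞) (a b : ℝ) :
    ∫⁻ x in Ioi a, f (x + b) = ∫⁻ x in Ioi (a + b), f x := by
  have h := (measurePreserving_add_right volume b).setLIntegral_comp_preimage_emb
    (measurableEmbedding_addRight b) f (Ioi (a + b))
  rwa [preimage_add_const_Ioi, add_sub_cancel_right] at h

theorem setLIntegral_Ioi_zero_comp_mul_left (f : ℝ → ℝ≥0∞) {c : ℝ} (hc : 0 < c) :
    ∫⁻ x in Ioi 0, f (c * x) = ENNReal.ofReal c⁻¹ * ∫⁻ x in Ioi 0, f x := by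
  have hemb : MeasurableEmbedding (c * ·) := (Homeomorph.mulLeft₀ c hc.ne').measurableEmbedding
  have hpre : (c * ·) ⁻¹' Ioi 0 = Ioi 0 := by rw [preimage_const_mul_Ioi₀ _ hc, zero_div]
  calc ∫⁻ x in Ioi 0, f (c * x) = ∫⁻ x in (c * ·) ⁻¹' Ioi 0, f (c * x) := by rw [hpre]
    _ = ∫⁻ y in Ioi 0, f y ∂(Measure.map (c * ·) volume) := by
      rw [hemb.restrict_map, hemb.lintegral_map]
    _ = ENNReal.ofReal c⁻¹ * ∫⁻ x in Ioi 0, f x := by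
      rw [Real.map_volume_mul_left hc.ne', Measure.restrict_smul, lintegral_smul_measure,
        abs_of_pos (inv_pos.2 hc), smul_eq_mul]

theorem lintegral_comp_abs (f : ℝ → ℝ≥0∞) :
    ∫⁻ x, f |x| = 2 * ∫⁻ x in Ioi 0, f x := by
  have hpos : ∫⁻ x in Ioi 0, f |x| = ∫⁻ x in Ioi 0, f x :=
    setLIntegral_congr_fun measurableSet_Ioi fun x hx => by rw [abs_of_pos hx]
  have hneg : ∫⁻ x in Iic 0, f |x| = ∫⁻ x in Ioi 0, f |x| := by
    have h := (Measure.measurePreserving_neg (volume : Measure ℝ)).setLIntegral_comp_preimage_emb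
      (Homeomorph.neg ℝ).measurableEmbedding (fun x => f |x|) (Iic 0)
    simp only [abs_neg, neg_preimage, neg_Iic, neg_zero] at h
    rw [← h, setLIntegral_congr Ioi_ae_eq_Ici]
  rw [← lintegral_add_compl _ measurableSet_Ioi, compl_Ioi, hneg, hpos, two_mul]

theorem lintegral_Ioo_zero_one_rpow_eq_top {s : ℝ} (hs : s ≤ -1) :
    ∫⁻ u in Ioo 0 1, ENNReal.ofReal (u ^ s) = ⊤ := by
  by_contra h
  rw [← Ne, lintegral_ofReal_ne_top_iff_integrable (by fun_prop)
    (ae_restrict_of_forall_mem measurableSet_Ioo fun u hu => rpow_nonneg hu.1.le s),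
    ← IntegrableOn, intervalIntegral.integrableOn_Ioo_rpow_iff one_pos] at h
  linarith

theorem lintegral_Ioi_inv_eq_top {t : ℝ} (ht : 0 < t) :
    ∫⁻ u in Ioi t, ENNReal.ofReal u⁻¹ = ⊤ := by
  by_contra h
  rw [← Ne, lintegral_ofReal_ne_top_iff_integrable (by fun_prop)
    (ae_restrict_of_forall_mem measurableSet_Ioi fun u (hu : t < u) =>
      inv_nonneg.2 (ht.trans hu).le), ← IntegrableOn] at h
  have hnot : ¬ IntegrableOn (fun u : ℝ => u ^ (-1 : ℝ)) (Ioi t) := by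
    rw [integrableOn_Ioi_rpow_iff ht]
    exact lt_irrefl _
  exact hnot (h.congr_fun (fun u _ => (rpow_neg_one u).symm) measurableSet_Ioi)

theorem lintegral_sin_sq_div_eq_top {a : ℝ} (ha : 0 < a) :
    ∫⁻ u in Ioi a, ENNReal.ofReal (sin u ^ 2 / u) = ⊤ := by
  set S := ∫⁻ u in Ioi a, ENNReal.ofReal (sin u ^ 2 / u)
  have hsin : ∫⁻ u in Ioi a, ENNReal.ofReal (sin u ^ 2 / (u + π / 2)) ≤ S :=
    setLIntegral_mono (by fun_prop) fun u (hu : a < u) =>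
      ENNReal.ofReal_le_ofReal (div_le_div_of_nonneg_left (sq_nonneg _) (ha.trans hu)
        (by linarith [pi_pos]))
  have hcos : ∫⁻ u in Ioi a, ENNReal.ofReal (cos u ^ 2 / (u + π / 2)) ≤ S := by
    simp_rw [← sin_add_pi_div_two]
    rw [setLIntegral_Ioi_comp_add_right (fun v => ENNReal.ofReal (sin v ^ 2 / v))]
    exact lintegral_mono_set (Ioi_subset_Ioi (by linarith [pi_pos]))
  have hsum : ∫⁻ u in Ioi a, ENNReal.ofReal (u + π / 2)⁻¹ ≤ S + S := by
    refine le_trans (le_of_eq ?_) (add_le_add hsin hcos)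
    rw [← lintegral_add_left (by fun_prop)]
    refine setLIntegral_congr_fun measurableSet_Ioi fun u (hu : a < u) => ?_
    have : 0 < u + π / 2 := by linarith [pi_pos]
    rw [← ENNReal.ofReal_add (by positivity) (by positivity), ← add_div, sin_sq_add_cos_sq,
      one_div]
  rw [setLIntegral_Ioi_comp_add_right (fun v => ENNReal.ofReal v⁻¹),
    lintegral_Ioi_inv_eq_top (by linarith [pi_pos]), top_le_iff, ENNReal.add_eq_top,
    or_self] at hsum
  exact hsum

theorem integral_sin_sq_mul_exp_neg_mul {x : ℝ} (hx : 0 < x) :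
    ∫ u in Ioi 0, sin u ^ 2 * exp (-(x * u)) = 2 / (x * (x ^ 2 + 4)) := by
  set a : ℂ := -x + 2 * Complex.I
  have ha_re : a.re = -x := by simp [a]
  have ha_im : a.im = 2 := by simp [a]
  have ha : a.re < 0 := by linarith
  have hpt : ∀ u : ℝ, sin u ^ 2 * exp (-(x * u)) =
      (exp (-x * u) - RCLike.re (Complex.exp (a * u))) / 2 := by
    intro u
    rw [RCLike.re_to_complex, Complex.exp_re, Complex.re_mul_ofReal, Complex.im_mul_ofReal, ha_re,
      ha_im, cos_two_mul, cos_sq']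
    ring_nf
  have hre : ∫ u in Ioi (0:ℝ), RCLike.re (Complex.exp (a * u)) = x / (x ^ 2 + 4) := by
    rw [integral_re (integrableOn_exp_mul_complex_Ioi ha 0), integral_exp_mul_complex_Ioi ha 0,
      Complex.ofReal_zero, mul_zero, Complex.exp_zero, RCLike.re_to_complex, neg_div,
      Complex.neg_re, one_div, Complex.inv_re, Complex.normSq_apply, ha_re, ha_im]
    field_simp
    ring
  simp_rw [hpt]
  rw [integral_div, integral_sub (integrableOn_exp_mul_Ioi (by linarith) 0)
    (integrableOn_exp_mul_complex_Ioi ha 0).re, integral_exp_mul_Ioi (by linarith), hre,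
    mul_zero, exp_zero]
  field_simp
  ring

theorem lintegral_sin_sq_mul_exp_neg_mul {x : ℝ} (hx : 0 < x) :
    ∫⁻ u in Ioi 0, ENNReal.ofReal (sin u ^ 2 * exp (-(x * u))) =
      ENNReal.ofReal (2 / (x * (x ^ 2 + 4))) := by
  have hint : IntegrableOn (fun u => sin u ^ 2 * exp (-(x * u))) (Ioi 0) := by
    refine (integrableOn_exp_mul_Ioi (neg_lt_zero.2 hx) 0).mono' (by fun_prop) ?_
    filter_upwards with u
    rw [norm_mul, norm_of_nonneg (sq_nonneg _), norm_of_nonneg (exp_nonneg _), neg_mul]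
    exact mul_le_of_le_one_left (exp_nonneg _) (sin_sq_le_one u)
  rw [← ofReal_integral_eq_lintegral_ofReal hint (ae_of_all _ fun u => by positivity),
    integral_sin_sq_mul_exp_neg_mul hx]

theorem lintegral_rpow_mul_exp_neg_mul {a r : ℝ} (ha : 0 < a) (hr : 0 < r) :
    ∫⁻ t in Ioi 0, ENNReal.ofReal (t ^ (a - 1) * exp (-(r * t))) =
      ENNReal.ofReal ((1 / r) ^ a * Gamma a) := by
  have hint : IntegrableOn (fun t => t ^ (a - 1) * exp (-(r * t))) (Ioi 0) := by
    refine (integrableOn_rpow_mul_exp_neg_mul_rpow (s := a - 1) (by linarith) one_pos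
      hr).congr_fun (fun t _ => ?_) measurableSet_Ioi
    simp only [rpow_one, neg_mul]
  rw [← ofReal_integral_eq_lintegral_ofReal hint
    (ae_restrict_of_forall_mem measurableSet_Ioi fun t (ht : 0 < t) => by positivity),
    integral_rpow_mul_exp_neg_mul_Ioi ha hr]

theorem lintegral_rpow_mul_exp_neg_mul_sq {q b : ℝ} (hq : -1 < q) (hb : 0 < b) :
    ∫⁻ x in Ioi 0, ENNReal.ofReal (x ^ q * exp (-b * x ^ 2)) =
      ENNReal.ofReal (b ^ (-(q + 1) / 2) * (1 / 2) * Gamma ((q + 1) / 2)) := by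
  have hval := integral_rpow_mul_exp_neg_mul_rpow two_pos hq hb
  simp only [rpow_two] at hval
  rw [← ofReal_integral_eq_lintegral_ofReal (integrableOn_rpow_mul_exp_neg_mul_sq hb hq)
    (ae_restrict_of_forall_mem measurableSet_Ioi fun t (ht : 0 < t) => by positivity), hval]

theorem ofReal_inv_eq_lintegral_exp_neg_mul {c : ℝ} (hc : 0 < c) :
    ENNReal.ofReal c⁻¹ = ∫⁻ s in Ioi 0, ENNReal.ofReal (exp (-(c * s))) := by
  simpa [Gamma_one] using (lintegral_rpow_mul_exp_neg_mul one_pos hc).symm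

theorem Gamma_add_one_div_two_mul_Gamma_one_sub_div_two (p : ℝ) :
    Gamma ((p + 1) / 2) * Gamma ((1 - p) / 2) = π / cos (π * p / 2) := by
  have h := Gamma_mul_Gamma_one_sub ((p + 1) / 2)
  rwa [show 1 - (p + 1) / 2 = (1 - p) / 2 by ring,
    show π * ((p + 1) / 2) = π * p / 2 + π / 2 by ring, sin_add_pi_div_two] at h

theorem lintegral_rpow_div_sq_add {p b : ℝ} (hp : p ∈ Ioo (-1) 1) (hb : 0 < b) :
    ∫⁻ y in Ioi 0, ENNReal.ofReal (y ^ p / (y ^ 2 + b)) =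
      ENNReal.ofReal (b ^ ((p - 1) / 2) * (π / (2 * cos (π * p / 2)))) := by
  obtain ⟨hp₁, hp₂⟩ := hp
  have hΓ : 0 < Gamma ((p + 1) / 2) := Gamma_pos_of_pos (by linarith)
  calc ∫⁻ y in Ioi 0, ENNReal.ofReal (y ^ p / (y ^ 2 + b))
      = ∫⁻ y in Ioi 0, ∫⁻ s in Ioi 0, ENNReal.ofReal (y ^ p * exp (-((y ^ 2 + b) * s))) := by
        refine setLIntegral_congr_fun measurableSet_Ioi fun y (hy : 0 < y) => ?_
        simp_rw [ENNReal.ofReal_mul (rpow_nonneg hy.le p)]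
        rw [lintegral_const_mul' _ _ ENNReal.ofReal_ne_top,
          ← ofReal_inv_eq_lintegral_exp_neg_mul (by positivity),
          ← ENNReal.ofReal_mul (by positivity), div_eq_mul_inv]
    _ = ∫⁻ s in Ioi 0, ∫⁻ y in Ioi 0, ENNReal.ofReal (y ^ p * exp (-((y ^ 2 + b) * s))) :=
        lintegral_lintegral_swap (by fun_prop)
    _ = ∫⁻ s in Ioi 0, ENNReal.ofReal (Gamma ((p + 1) / 2) / 2) *
          ENNReal.ofReal (s ^ ((1 - p) / 2 - 1) * exp (-(b * s))) := by
        refine setLIntegral_congr_fun measurableSet_Ioi fun s (hs : 0 < s) => ?_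
        have hsplit : ∀ y, y ^ p * exp (-((y ^ 2 + b) * s)) =
            exp (-(b * s)) * (y ^ p * exp (-s * y ^ 2)) := fun y => by
          rw [mul_left_comm, ← exp_add]
          ring_nf
        simp_rw [hsplit, ENNReal.ofReal_mul (exp_nonneg _)]
        rw [lintegral_const_mul' _ _ ENNReal.ofReal_ne_top,
          lintegral_rpow_mul_exp_neg_mul_sq hp₁ hs, ← ENNReal.ofReal_mul (by positivity),
          ← ENNReal.ofReal_mul (by positivity)]
        congr 1
        rw [show (1 - p) / 2 - 1 = -(p + 1) / 2 by ring]
        ring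
    _ = _ := by
        rw [lintegral_const_mul' _ _ ENNReal.ofReal_ne_top,
          lintegral_rpow_mul_exp_neg_mul (by linarith) hb, ← ENNReal.ofReal_mul (by positivity)]
        congr 1
        rw [div_mul_eq_div_div_swap, ← Gamma_add_one_div_two_mul_Gamma_one_sub_div_two, one_div,
          inv_rpow hb.le, ← rpow_neg hb.le, show -((1 - p) / 2) = (p - 1) / 2 by ring]
        ring

noncomputable def sinSqIntegral (α : ℝ) : ℝ≥0∞ :=
  ∫⁻ u in Ioi 0, ENNReal.ofReal (sin u ^ 2 * u ^ (α - 2))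

theorem sinSqIntegral_eq_top_of_le_neg_one {α : ℝ} (hα : α ≤ -1) : sinSqIntegral α = ⊤ := by
  have hbound : ∫⁻ u in Ioo 0 1, ENNReal.ofReal (u ^ α) ≤
      ENNReal.ofReal ((π / 2) ^ 2) * sinSqIntegral α := by
    rw [sinSqIntegral, ← lintegral_const_mul' _ _ ENNReal.ofReal_ne_top]
    refine (setLIntegral_mono' measurableSet_Ioo fun u ⟨hu₀, hu₁⟩ => ?_).trans
      (lintegral_mono_set Ioo_subset_Ioi_self)
    rw [← ENNReal.ofReal_mul (by positivity)]
    refine ENNReal.ofReal_le_ofReal ?_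
    have hjordan : 2 / π * u ≤ sin u := mul_le_sin hu₀.le (by linarith [pi_gt_three])
    calc u ^ α = u ^ 2 * u ^ (α - 2) := by
          rw [← rpow_two, ← rpow_add hu₀, add_sub_cancel]
      _ ≤ ((π / 2) * sin u) ^ 2 * u ^ (α - 2) := by
          gcongr
          rw [div_mul_eq_mul_div, div_le_iff₀ pi_pos] at hjordan
          linarith
      _ = _ := by ring
  rw [lintegral_Ioo_zero_one_rpow_eq_top hα, top_le_iff, ENNReal.mul_eq_top] at hbound
  simpa using hbound

theorem sinSqIntegral_eq_top_of_one_le {α : ℝ} (hα : 1 ≤ α) : sinSqIntegral α = ⊤ := by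
  refine top_le_iff.1 ((lintegral_sin_sq_div_eq_top one_pos).ge.trans ?_)
  refine (setLIntegral_mono (by fun_prop) fun u (hu : 1 < u) => ?_).trans
    (lintegral_mono_set (Ioi_subset_Ioi zero_le_one))
  refine ENNReal.ofReal_le_ofReal ?_
  rw [div_eq_mul_inv, ← rpow_neg_one]
  gcongr
  · exact hu.le
  · linarith

theorem sinSqIntegral_eq {α : ℝ} (hα : α ∈ Ioo (-1) 1) :
    sinSqIntegral α = ENNReal.ofReal (2 ^ (-α) * π / (2 * Gamma (2 - α) * cos (π * α / 2))) := by
  obtain ⟨hα₁, hα₂⟩ := hα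
  have hΓ : 0 < Gamma (2 - α) := Gamma_pos_of_pos (by linarith)
  calc sinSqIntegral α
      = ∫⁻ u in Ioi 0, ∫⁻ x in Ioi 0, ENNReal.ofReal ((Gamma (2 - α))⁻¹ * sin u ^ 2) *
          ENNReal.ofReal (x ^ (1 - α) * exp (-(u * x))) := by
        refine setLIntegral_congr_fun measurableSet_Ioi fun u (hu : 0 < u) => ?_
        rw [lintegral_const_mul' _ _ ENNReal.ofReal_ne_top, show 1 - α = 2 - α - 1 by ring,
          lintegral_rpow_mul_exp_neg_mul (by linarith) hu, ← ENNReal.ofReal_mul (by positivity),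
          one_div, inv_rpow hu.le, ← rpow_neg hu.le, neg_sub]
        field_simp
    _ = ∫⁻ x in Ioi 0, ∫⁻ u in Ioi 0, ENNReal.ofReal ((Gamma (2 - α))⁻¹ * sin u ^ 2) *
          ENNReal.ofReal (x ^ (1 - α) * exp (-(u * x))) :=
        lintegral_lintegral_swap (by fun_prop)
    _ = ∫⁻ x in Ioi 0, ENNReal.ofReal (2 / Gamma (2 - α)) *
          ENNReal.ofReal (x ^ (-α) / (x ^ 2 + 4)) := by
        refine setLIntegral_congr_fun measurableSet_Ioi fun x (hx : 0 < x) => ?_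
        have hsplit : ∀ u, ENNReal.ofReal ((Gamma (2 - α))⁻¹ * sin u ^ 2) *
            ENNReal.ofReal (x ^ (1 - α) * exp (-(u * x))) =
            ENNReal.ofReal ((Gamma (2 - α))⁻¹ * x ^ (1 - α)) *
              ENNReal.ofReal (sin u ^ 2 * exp (-(x * u))) := fun u => by
          rw [← ENNReal.ofReal_mul (by positivity), ← ENNReal.ofReal_mul (by positivity),
            mul_comm u x]
          ring_nf
        simp_rw [hsplit]
        rw [lintegral_const_mul' _ _ ENNReal.ofReal_ne_top, lintegral_sin_sq_mul_exp_neg_mul hx,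
          ← ENNReal.ofReal_mul (by positivity), ← ENNReal.ofReal_mul (by positivity),
          show 1 - α = -α + 1 by ring, rpow_add_one hx.ne']
        field_simp
    _ = _ := by
        rw [lintegral_const_mul' _ _ ENNReal.ofReal_ne_top,
          lintegral_rpow_div_sq_add ⟨by linarith, by linarith⟩ four_pos,
          ← ENNReal.ofReal_mul (by positivity)]
        congr 1
        rw [show (4:ℝ) = 2 ^ (2:ℝ) by norm_num, ← rpow_mul zero_le_two,
          show 2 * ((-α - 1) / 2) = -α - 1 by ring, rpow_sub_one two_ne_zero, mul_div_assoc,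
          neg_div, mul_neg, cos_neg]
        field_simp

theorem setLIntegral_Ioc_rpow {s T : ℝ} (hs : -1 < s) (hT : 0 ≤ T) :
    ∫⁻ t in Ioc 0 T, ENNReal.ofReal (t ^ s) = ENNReal.ofReal (T ^ (s + 1) / (s + 1)) := by
  have hint : IntegrableOn (fun t => t ^ s) (Ioc 0 T) := by
    have := intervalIntegral.intervalIntegrable_rpow' (a := 0) (b := T) hs
    rwa [intervalIntegrable_iff, uIoc_of_le hT] at this
  rw [← ofReal_integral_eq_lintegral_ofReal hint
    (ae_restrict_of_forall_mem measurableSet_Ioc fun t ht => rpow_nonneg ht.1.le s),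
    ← intervalIntegral.integral_of_le hT, integral_rpow (Or.inl hs),
    zero_rpow (by linarith), sub_zero]

theorem setLIntegral_Ioc_rpow_ne_zero (s : ℝ) {T : ℝ} (hT : 0 < T) :
    ∫⁻ t in Ioc 0 T, ENNReal.ofReal (t ^ s) ≠ 0 := by
  have hsupp : Function.support (fun t => ENNReal.ofReal (t ^ s)) ∩ Ioc 0 T = Ioc 0 T :=
    inter_eq_right.2 fun t ht => by
      simpa using rpow_pos_of_pos ht.1 s
  rw [← pos_iff_ne_zero, setLIntegral_pos_iff (by fun_prop), hsupp, Real.volume_Ioc]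
  simpa using hT

theorem lintegral_sin_sq_div_sq_mul_abs_rpow (α : ℝ) {t : ℝ} (ht : 0 < t) :
    ∫⁻ ξ, ENNReal.ofReal (sin (t * |ξ|) ^ 2 / ξ ^ 2 * |ξ| ^ α) =
      2 * ENNReal.ofReal (t ^ (1 - α)) * sinSqIntegral α := by
  calc ∫⁻ ξ, ENNReal.ofReal (sin (t * |ξ|) ^ 2 / ξ ^ 2 * |ξ| ^ α)
      = 2 * ∫⁻ x in Ioi 0, ENNReal.ofReal (sin (t * x) ^ 2 / x ^ 2 * x ^ α) := by
        rw [← lintegral_comp_abs (fun x => ENNReal.ofReal (sin (t * x) ^ 2 / x ^ 2 * x ^ α))]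
        simp only [sq_abs]
    _ = 2 * ∫⁻ x in Ioi 0, ENNReal.ofReal (t ^ (2 - α)) *
          ENNReal.ofReal (sin (t * x) ^ 2 * (t * x) ^ (α - 2)) := by
        congr 1
        refine setLIntegral_congr_fun measurableSet_Ioi fun x (hx : 0 < x) => ?_
        rw [← ENNReal.ofReal_mul (by positivity), mul_rpow ht.le hx.le, rpow_sub hx, rpow_sub ht,
          rpow_sub ht, rpow_two, rpow_two]
        field_simp
    _ = 2 * ENNReal.ofReal (t ^ (1 - α)) * sinSqIntegral α := by
        rw [lintegral_const_mul' _ _ ENNReal.ofReal_ne_top,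
          setLIntegral_Ioi_zero_comp_mul_left
            (fun u => ENNReal.ofReal (sin u ^ 2 * u ^ (α - 2))) ht,
          sinSqIntegral, mul_assoc 2, ← mul_assoc (ENNReal.ofReal _),
          ← ENNReal.ofReal_mul (by positivity), ← rpow_neg_one, ← rpow_add ht]
        ring_nf

theorem wave_integral_eq_mul (T α : ℝ) :
    ∫⁻ t in Ioc 0 T, ∫⁻ ξ, ENNReal.ofReal (sin (t * |ξ|) ^ 2 / ξ ^ 2 * |ξ| ^ α) =
      2 * (∫⁻ t in Ioc 0 T, ENNReal.ofReal (t ^ (1 - α))) * sinSqIntegral α := by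
  rw [← lintegral_const_mul' _ _ ENNReal.ofNat_ne_top, ← lintegral_mul_const _ (by fun_prop)]
  exact setLIntegral_congr_fun measurableSet_Ioc fun t ht =>
    lintegral_sin_sq_div_sq_mul_abs_rpow α ht.1

theorem wave_constant_eq {α : ℝ} (hα : α ∈ Ioo (-1) 1) :
    (if α = 0 then π / 2 else Gamma α * sin (π * α / 2) / (1 - α)) =
      π / (2 * Gamma (2 - α) * cos (π * α / 2)) := by
  obtain ⟨hα₁, hα₂⟩ := hα
  split_ifs with h0
  · simp [h0]
  have hsin : sin (π * α) ≠ 0 := by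
    rw [Ne, sin_eq_zero_iff_of_lt_of_lt (by nlinarith [pi_pos]) (by nlinarith [pi_pos])]
    exact mul_ne_zero pi_ne_zero h0
  have hcos : 0 < cos (π * α / 2) :=
    cos_pos_of_mem_Ioo ⟨by nlinarith [pi_pos], by nlinarith [pi_pos]⟩
  have hΓ : Gamma (2 - α) = (1 - α) * Gamma (1 - α) := by
    rw [show 2 - α = (1 - α) + 1 by ring, Gamma_add_one (by linarith)]
  have hrefl := Gamma_mul_Gamma_one_sub α
  rw [show π * α = 2 * (π * α / 2) by ring, sin_two_mul] at hsin hrefl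
  rw [hΓ]
  field_simp
  rw [eq_div_iff hsin] at hrefl
  linear_combination hrefl

/-- Lemma 3.1 of Balan–Jolis–Quer (wave case): the integral
`A_T(α) = ∫₀^T ∫_ℝ sin²(t|ξ|)/ξ² · |ξ|^α dξ dt` is finite iff `α ∈ (-1,1)`,
in which case it equals `2^{1-α} C_α T^{2-α}/(2-α)`. -/
theorem wave_spectral_integral (T : ℝ) (hT : 0 < T) (α : ℝ) :
    ((∫⁻ t in Set.Ioc (0 : ℝ) T, ∫⁻ ξ : ℝ,
        ENNReal.ofReal ((Real.sin (t * |ξ|)) ^ 2 / ξ ^ 2 * |ξ| ^ α)) < ⊤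
      ↔ α ∈ Set.Ioo (-1 : ℝ) 1) ∧
    (α ∈ Set.Ioo (-1 : ℝ) 1 →
      (∫⁻ t in Set.Ioc (0 : ℝ) T, ∫⁻ ξ : ℝ,
        ENNReal.ofReal ((Real.sin (t * |ξ|)) ^ 2 / ξ ^ 2 * |ξ| ^ α))
        = ENNReal.ofReal ((2 : ℝ) ^ (1 - α) *
            (if α = 0 then Real.pi / 2
              else Real.Gamma α * Real.sin (Real.pi * α / 2) / (1 - α)) *
            T ^ (2 - α) / (2 - α))) := by
  rw [wave_integral_eq_mul]
  refine ⟨⟨fun hfin => ?_, fun hα => ?_⟩, fun hα => ?_⟩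
  · by_contra hα
    have hI : sinSqIntegral α = ⊤ := by
      rcases le_or_gt α (-1) with h | h
      · exact sinSqIntegral_eq_top_of_le_neg_one h
      · exact sinSqIntegral_eq_top_of_one_le (not_lt.1 fun h' => hα ⟨h, h'⟩)
    rw [hI, ENNReal.mul_top (mul_ne_zero two_ne_zero (setLIntegral_Ioc_rpow_ne_zero _ hT))] at hfin
    exact lt_irrefl _ hfin
  · rw [setLIntegral_Ioc_rpow (by linarith [hα.2]) hT.le, sinSqIntegral_eq hα]
    exact ENNReal.mul_lt_top (ENNReal.mul_lt_top ENNReal.ofNat_lt_top ENNReal.ofReal_lt_top)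
      ENNReal.ofReal_lt_top
  · have h2α : 0 < 2 - α := by linarith [hα.2]
    rw [setLIntegral_Ioc_rpow (by linarith [hα.2]) hT.le, show 1 - α + 1 = 2 - α by ring,
      sinSqIntegral_eq hα, wave_constant_eq hα, ← ENNReal.ofReal_ofNat,
      ← ENNReal.ofReal_mul zero_le_two, ← ENNReal.ofReal_mul (by positivity)]
    congr 1
    rw [show 1 - α = -α + 1 by ring, rpow_add_one two_ne_zero]
    ring
end

section
/- Let T > 0, α ∈ (−1,1) and h > 0. Then ∫₀^T ∫_ℝ ( e^{−(t+h)ξ²/2} − e^{−tξ²/2} )² · |ξ|^α dξ dt ≤ C_α · h^{(1−α)/2}, where C_α = ∫_ℝ (1 − e^{−η²/2})² · |η|^{α−2} dη < ∞. -/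
open MeasureTheory Real Set
open scoped ENNReal

/-! Since `e^{-(t+h)ξ²/2} - e^{-tξ²/2} = e^{-tξ²/2} (e^{-hξ²/2} - 1)` and
`∫₀^∞ e^{-tξ²} dt = ξ⁻²`, Tonelli bounds the double integral by
`∫ (1 - e^{-hξ²/2})² |ξ|^{α-2} dξ` (with equality if `(0, T]` is replaced by `(0, ∞)`),
and the substitution `ξ = √h η` turns this into `C_α h^{(1-α)/2}`. `C_α` is finite because
its integrand is `O(|η|^{α+2})` at `0` and `O(|η|^{α-2})` at `∞`. -/

lemma lintegral_comp_mul_left (f : ℝ → ℝ≥0∞) {a : ℝ} (ha : a ≠ 0) :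
    ∫⁻ x, f (a * x) = ENNReal.ofReal |a⁻¹| * ∫⁻ x, f x := by
  rw [← (measurableEmbedding_mulLeft₀ ha).lintegral_map, Real.map_volume_mul_left ha,
    lintegral_smul_measure, smul_eq_mul]

lemma lintegral_Ioi_exp_neg_mul {c : ℝ} (hc : 0 < c) :
    ∫⁻ t in Ioi 0, ENNReal.ofReal (exp (-c * t)) = ENNReal.ofReal c⁻¹ := by
  rw [← ofReal_integral_eq_lintegral_ofReal (exp_neg_integrableOn_Ioi 0 hc)
    (ae_of_all _ fun t => (exp_pos _).le), integral_exp_mul_Ioi (neg_neg_of_pos hc)]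
  simp

lemma exp_neg_add_sub_exp_neg_sq (t h x : ℝ) :
    (exp (-(t + h) * x / 2) - exp (-t * x / 2)) ^ 2
      = exp (-x * t) * (1 - exp (-h * x / 2)) ^ 2 := by
  have split : exp (-(t + h) * x / 2) = exp (-t * x / 2) * exp (-h * x / 2) := by
    rw [← exp_add]; ring_nf
  have square : exp (-x * t) = exp (-t * x / 2) ^ 2 := by
    rw [← exp_nat_mul]; ring_nf
  rw [split, square]; ring

lemma integrableOn_Ioi_one_sub_exp_neg_sq_mul_rpow {p : ℝ} (hp₁ : -5 < p) (hp₂ : p < -1) :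
    IntegrableOn (fun r : ℝ => (1 - exp (-r ^ 2 / 2)) ^ 2 * r ^ p) (Ioi 0) := by
  have hmeas : AEStronglyMeasurable (fun r : ℝ => (1 - exp (-r ^ 2 / 2)) ^ 2 * r ^ p) := by
    fun_prop
  have hnonneg (r : ℝ) : 0 ≤ 1 - exp (-r ^ 2 / 2) := by
    have : exp (-r ^ 2 / 2) ≤ 1 := exp_le_one_iff.2 (by linarith [sq_nonneg r])
    linarith
  rw [← Ioc_union_Ioi_eq_Ioi zero_le_one]
  refine IntegrableOn.union ?_ ?_
  · have hdom : IntegrableOn (fun r : ℝ => r ^ (p + 4)) (Ioc 0 1) :=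
      ((intervalIntegral.integrableOn_Ioo_rpow_iff one_pos).2 (by linarith)).congr_set_ae
        Ioo_ae_eq_Ioc.symm
    refine hdom.mono' hmeas.restrict (ae_restrict_of_forall_mem measurableSet_Ioc fun r hr => ?_)
    have hle : 1 - exp (-r ^ 2 / 2) ≤ r ^ 2 := by
      have := one_sub_le_exp_neg (r ^ 2 / 2)
      rw [neg_div]; linarith [sq_nonneg r]
    rw [Real.norm_of_nonneg (mul_nonneg (sq_nonneg _) (rpow_nonneg hr.1.le _)), rpow_add hr.1,
      show (4 : ℝ) = (4 : ℕ) by norm_num, rpow_natCast]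
    calc (1 - exp (-r ^ 2 / 2)) ^ 2 * r ^ p ≤ (r ^ 2) ^ 2 * r ^ p :=
          mul_le_mul_of_nonneg_right (pow_le_pow_left₀ (hnonneg r) hle 2) (rpow_nonneg hr.1.le _)
      _ = r ^ p * r ^ 4 := by ring
  · refine (integrableOn_Ioi_rpow_of_lt hp₂ one_pos).mono' hmeas.restrict
      (ae_restrict_of_forall_mem measurableSet_Ioi fun r hr => ?_)
    have hr₀ : (0 : ℝ) < r := zero_lt_one.trans hr
    have hle : 1 - exp (-r ^ 2 / 2) ≤ 1 := by linarith [exp_pos (-r ^ 2 / 2)]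
    rw [Real.norm_of_nonneg (mul_nonneg (sq_nonneg _) (rpow_nonneg hr₀.le _))]
    calc (1 - exp (-r ^ 2 / 2)) ^ 2 * r ^ p ≤ 1 ^ 2 * r ^ p :=
          mul_le_mul_of_nonneg_right (pow_le_pow_left₀ (hnonneg r) hle 2) (rpow_nonneg hr₀.le _)
      _ = r ^ p := by ring

lemma integrable_one_sub_exp_neg_sq_mul_abs_rpow {p : ℝ} (hp₁ : -5 < p) (hp₂ : p < -1) :
    Integrable (fun η : ℝ => (1 - exp (-η ^ 2 / 2)) ^ 2 * |η| ^ p) := by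
  have := (integrable_fun_norm_addHaar (E := ℝ) volume
    (f := fun r : ℝ => (1 - exp (-r ^ 2 / 2)) ^ 2 * r ^ p)).2
    (by simpa using integrableOn_Ioi_one_sub_exp_neg_sq_mul_rpow hp₁ hp₂)
  simpa only [Real.norm_eq_abs, sq_abs] using this

lemma lintegral_Ioi_exp_neg_add_sub_exp_neg_sq {ξ : ℝ} (hξ : ξ ≠ 0) (h α : ℝ) :
    ∫⁻ t in Ioi 0, ENNReal.ofReal
        ((exp (-(t + h) * ξ ^ 2 / 2) - exp (-t * ξ ^ 2 / 2)) ^ 2 * |ξ| ^ α)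
      = ENNReal.ofReal ((1 - exp (-h * ξ ^ 2 / 2)) ^ 2 * |ξ| ^ (α - 2)) := by
  have hξ₂ : 0 < ξ ^ 2 := by positivity
  simp_rw [exp_neg_add_sub_exp_neg_sq, mul_assoc, ENNReal.ofReal_mul (exp_pos _).le]
  rw [lintegral_mul_const _ (by fun_prop), lintegral_Ioi_exp_neg_mul hξ₂,
    ← ENNReal.ofReal_mul (by positivity), rpow_sub (abs_pos.2 hξ), rpow_two, sq_abs]
  congr 1
  field_simp

lemma lintegral_one_sub_exp_neg_mul_sq_mul_abs_rpow {h : ℝ} (hh : 0 < h) (p : ℝ) :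
    ∫⁻ ξ, ENNReal.ofReal ((1 - exp (-h * ξ ^ 2 / 2)) ^ 2 * |ξ| ^ p)
      = (∫⁻ η, ENNReal.ofReal ((1 - exp (-η ^ 2 / 2)) ^ 2 * |η| ^ p))
          * ENNReal.ofReal (h ^ (-(p + 1) / 2)) := by
  set s := √h with hs_def
  have hs : 0 < s := sqrt_pos.2 hh
  have hs₂ : s ^ 2 = h := sq_sqrt hh.le
  have hrescale (ξ : ℝ) : ENNReal.ofReal ((1 - exp (-h * ξ ^ 2 / 2)) ^ 2 * |ξ| ^ p)
      = ENNReal.ofReal (s ^ (-p))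
          * ENNReal.ofReal ((1 - exp (-(s * ξ) ^ 2 / 2)) ^ 2 * |s * ξ| ^ p) := by
    have hsp : s ^ (-p) * s ^ p = 1 := by rw [← rpow_add hs]; simp
    rw [← ENNReal.ofReal_mul (by positivity), abs_mul, abs_of_pos hs,
      mul_rpow hs.le (abs_nonneg _), mul_pow, hs₂, ← neg_mul]
    congr 1
    linear_combination (-((1 - exp (-h * ξ ^ 2 / 2)) ^ 2 * |ξ| ^ p)) * hsp
  simp_rw [hrescale]
  rw [lintegral_const_mul' _ _ ENNReal.ofReal_ne_top,
    lintegral_comp_mul_left (fun η => ENNReal.ofReal ((1 - exp (-η ^ 2 / 2)) ^ 2 * |η| ^ p))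
      hs.ne', abs_of_pos (inv_pos.2 hs), ← mul_assoc, ← ENNReal.ofReal_mul (by positivity),
    mul_comm]
  congr 2
  rw [← rpow_neg_one, ← rpow_add hs, hs_def, sqrt_eq_rpow, ← rpow_mul hh.le]
  ring_nf

theorem heat_spectral_time_increment_general (T : ℝ) (α : ℝ)
    (hα : α ∈ Set.Ioo (-1 : ℝ) 1) (h : ℝ) (hh : 0 < h) :
    (∫⁻ η : ℝ, ENNReal.ofReal ((1 - Real.exp (-η ^ 2 / 2)) ^ 2 * |η| ^ (α - 2))) < ⊤ ∧
    (∫⁻ t in Set.Ioc (0 : ℝ) T, ∫⁻ ξ : ℝ,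
        ENNReal.ofReal ((Real.exp (-(t + h) * ξ ^ 2 / 2) - Real.exp (-t * ξ ^ 2 / 2)) ^ 2
          * |ξ| ^ α))
      ≤ (∫⁻ η : ℝ, ENNReal.ofReal ((1 - Real.exp (-η ^ 2 / 2)) ^ 2 * |η| ^ (α - 2))) *
          ENNReal.ofReal (h ^ ((1 - α) / 2)) := by
  refine ⟨(integrable_one_sub_exp_neg_sq_mul_abs_rpow (by linarith [hα.1])
    (by linarith [hα.2])).lintegral_lt_top, ?_⟩
  calc _ ≤ ∫⁻ t in Ioi 0, ∫⁻ ξ : ℝ, ENNReal.ofReal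
          ((exp (-(t + h) * ξ ^ 2 / 2) - exp (-t * ξ ^ 2 / 2)) ^ 2 * |ξ| ^ α) :=
        lintegral_mono_set Ioc_subset_Ioi_self
    _ = ∫⁻ ξ : ℝ, ∫⁻ t in Ioi 0, ENNReal.ofReal
          ((exp (-(t + h) * ξ ^ 2 / 2) - exp (-t * ξ ^ 2 / 2)) ^ 2 * |ξ| ^ α) :=
        lintegral_lintegral_swap (by fun_prop)
    _ = ∫⁻ ξ : ℝ, ENNReal.ofReal ((1 - exp (-h * ξ ^ 2 / 2)) ^ 2 * |ξ| ^ (α - 2)) :=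
        lintegral_congr_ae ((Measure.ae_ne volume 0).mono fun ξ hξ =>
          lintegral_Ioi_exp_neg_add_sub_exp_neg_sq hξ h α)
    _ = _ := by
        rw [lintegral_one_sub_exp_neg_mul_sq_mul_abs_rpow hh,
          show -(α - 2 + 1) / 2 = (1 - α) / 2 by ring]

/-- Lemma 3.5 of Balan–Jolis–Quer (heat case):
`∫₀^T ∫_ℝ (e^{-(t+h)ξ²/2} - e^{-tξ²/2})² |ξ|^α dξ dt ≤ C_α h^{(1-α)/2}` with
`C_α = ∫_ℝ (1 - e^{-η²/2})² |η|^{α-2} dη < ∞`. -/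
theorem heat_spectral_time_increment (T : ℝ) (hT : 0 < T) (α : ℝ)
    (hα : α ∈ Set.Ioo (-1 : ℝ) 1) (h : ℝ) (hh : 0 < h) :
    (∫⁻ η : ℝ, ENNReal.ofReal ((1 - Real.exp (-η ^ 2 / 2)) ^ 2 * |η| ^ (α - 2))) < ⊤ ∧
    (∫⁻ t in Set.Ioc (0 : ℝ) T, ∫⁻ ξ : ℝ,
        ENNReal.ofReal ((Real.exp (-(t + h) * ξ ^ 2 / 2) - Real.exp (-t * ξ ^ 2 / 2)) ^ 2
          * |ξ| ^ α))
      ≤ (∫⁻ η : ℝ, ENNReal.ofReal ((1 - Real.exp (-η ^ 2 / 2)) ^ 2 * |η| ^ (α - 2))) *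
          ENNReal.ofReal (h ^ ((1 - α) / 2)) :=
  heat_spectral_time_increment_general T α hα h hh
end

section
/- Let T > 0, α ∈ (−1,1) and h > 0. Then ∫₀^T ∫_ℝ ( sin((t+h)·|ξ|) − sin(t·|ξ|) )² / ξ² · |ξ|^α dξ dt ≤ C_α · T · h^{1−α}, where C_α = 4 ∫_ℝ min(1, η²) · |η|^{α−2} dη < ∞. -/
open MeasureTheory Real Set ENNReal

lemma aux_integrable (α : ℝ) (hα : α ∈ Set.Ioo (-1 : ℝ) 1) :
    Integrable (fun η : ℝ => min 1 (η ^ 2) * |η| ^ (α - 2)) := by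
  obtain ⟨h1, h2⟩ := hα
  set f : ℝ → ℝ := fun η => min 1 (η ^ 2) * |η| ^ (α - 2) with hf
  have hpos : IntegrableOn f (Ioi 0) := by
    have hsplit : Ioi (0:ℝ) = Ioc 0 1 ∪ Ioi 1 := by
      rw [Set.Ioc_union_Ioi_eq_Ioi]; norm_num
    rw [hsplit]
    apply IntegrableOn.union
    · have hbase : IntegrableOn (fun η : ℝ => η ^ α) (Ioc (0:ℝ) 1) := by
        have := intervalIntegral.intervalIntegrable_rpow' (a := 0) (b := 1) (r := α) (by linarith)
        simpa [intervalIntegrable_iff, uIoc_of_le (zero_le_one (α := ℝ))] using this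
      apply hbase.congr_fun ?_ measurableSet_Ioc
      intro x hx
      have hx0 : 0 < x := hx.1
      have hx1 : x ^ 2 ≤ 1 := by nlinarith [hx.2]
      simp only [hf]
      rw [min_eq_right hx1, abs_of_pos hx0, ← Real.rpow_natCast x 2, ← Real.rpow_add hx0]
      norm_num
    · have hbase : IntegrableOn (fun η : ℝ => η ^ (α - 2)) (Ioi (1:ℝ)) :=
        integrableOn_Ioi_rpow_of_lt (by linarith) one_pos
      apply hbase.congr_fun ?_ measurableSet_Ioi
      intro x hx
      have hx0 : (1:ℝ) < x := hx
      have hx1 : (1:ℝ) ≤ x ^ 2 := by nlinarith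
      simp only [hf]
      rw [min_eq_left hx1, abs_of_pos (by linarith), one_mul]
  have hneg : IntegrableOn f (Iio 0) := by
    have key := (MeasurePreserving.integrableOn_comp_preimage
      (Measure.measurePreserving_neg (volume : Measure ℝ))
      (Homeomorph.neg ℝ).measurableEmbedding (f := f) (s := Ioi 0)).2 hpos
    have heq : f ∘ Neg.neg = f := by
      funext x; simp [hf]
    have hset : (Neg.neg ⁻¹' Ioi 0 : Set ℝ) = Iio 0 := by
      ext x; simp
    rwa [heq, hset] at key
  have hall : IntegrableOn f (Iio 0 ∪ {0} ∪ Ioi 0) := by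
    refine IntegrableOn.union (IntegrableOn.union hneg ?_) hpos
    simp [IntegrableOn]
  have huniv : (Iio (0:ℝ) ∪ {0} ∪ Ioi 0) = univ := by
    ext x; simp [lt_trichotomy x 0]
  rw [← integrableOn_univ, ← huniv]
  exact hall


/-- Lemma 3.5 of Balan–Jolis–Quer (wave case):
`∫₀^T ∫_ℝ (sin((t+h)|ξ|) - sin(t|ξ|))²/ξ² |ξ|^α dξ dt ≤ C_α T h^{1-α}` with
`C_α = 4 ∫_ℝ min(1, η²) |η|^{α-2} dη < ∞`. -/
theorem wave_spectral_time_increment (T : ℝ) (hT : 0 < T) (α : ℝ)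
    (hα : α ∈ Set.Ioo (-1 : ℝ) 1) (h : ℝ) (hh : 0 < h) :
    ((4 : ℝ≥0∞) * ∫⁻ η : ℝ, ENNReal.ofReal (min 1 (η ^ 2) * |η| ^ (α - 2))) < ⊤ ∧
    (∫⁻ t in Set.Ioc (0 : ℝ) T, ∫⁻ ξ : ℝ,
        ENNReal.ofReal ((Real.sin ((t + h) * |ξ|) - Real.sin (t * |ξ|)) ^ 2 / ξ ^ 2
          * |ξ| ^ α))
      ≤ ((4 : ℝ≥0∞) * ∫⁻ η : ℝ, ENNReal.ofReal (min 1 (η ^ 2) * |η| ^ (α - 2))) *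
          ENNReal.ofReal (T * h ^ (1 - α)) := by
  obtain ⟨hα1, hα2⟩ := hα
  set C₀ : ℝ≥0∞ := ∫⁻ η : ℝ, ENNReal.ofReal (min 1 (η ^ 2) * |η| ^ (α - 2)) with hC₀
  have hint := aux_integrable α ⟨hα1, hα2⟩
  have hC₀top : C₀ < ⊤ := by
    refine lt_of_le_of_lt ?_ hint.2
    exact lintegral_mono fun η => Real.ofReal_le_enorm _
  have hfin : ((4 : ℝ≥0∞) * C₀) < ⊤ := ENNReal.mul_lt_top (by norm_num) hC₀top
  refine ⟨hfin, ?_⟩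
  have hgm : Measurable (fun η : ℝ => ENNReal.ofReal (min 4 (η ^ 2) * |η| ^ (α - 2))) := by
    fun_prop
  -- pointwise bound
  have hpt : ∀ t ξ : ℝ, (Real.sin ((t + h) * |ξ|) - Real.sin (t * |ξ|)) ^ 2 / ξ ^ 2
      * |ξ| ^ α ≤ min 4 (h ^ 2 * ξ ^ 2) * |ξ| ^ (α - 2) := by
    intro t ξ
    rcases eq_or_ne ξ 0 with rfl | hξ
    · simp
    · have habs : 0 < |ξ| := abs_pos.2 hξ
      have hsq : |ξ| ^ (2:ℝ) = ξ ^ 2 := by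
        rw [show (2:ℝ) = ((2:ℕ):ℝ) by norm_num, Real.rpow_natCast, sq_abs]
      have hd : (Real.sin ((t + h) * |ξ|) - Real.sin (t * |ξ|)) ^ 2 ≤ min 4 (h ^ 2 * ξ ^ 2) := by
        set a : ℝ := (t + h) * |ξ| with ha
        set b : ℝ := t * |ξ| with hb
        have hlip : |Real.sin a - Real.sin b| ≤ |a - b| := by
          rw [Real.sin_sub_sin]
          calc |2 * Real.sin ((a - b) / 2) * Real.cos ((a + b) / 2)|
              = 2 * |Real.sin ((a - b) / 2)| * |Real.cos ((a + b) / 2)| := by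
                rw [abs_mul, abs_mul, abs_two]
            _ ≤ 2 * |(a - b) / 2| * 1 :=
                mul_le_mul (mul_le_mul_of_nonneg_left Real.abs_sin_le_abs (by norm_num))
                  (Real.abs_cos_le_one _) (abs_nonneg _) (by positivity)
            _ = |a - b| := by rw [mul_one, abs_div, abs_two]; ring

        have h2 : |Real.sin a - Real.sin b| ≤ 2 := by
          calc |Real.sin a - Real.sin b|
              ≤ |Real.sin a| + |Real.sin b| := abs_sub _ _
            _ ≤ 1 + 1 := add_le_add (abs_le.2 ⟨Real.neg_one_le_sin _, Real.sin_le_one _⟩)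
                (abs_le.2 ⟨Real.neg_one_le_sin _, Real.sin_le_one _⟩)
            _ = 2 := by norm_num
        have hh2 : |a - b| = h * |ξ| := by
          rw [show a - b = h * |ξ| by rw [ha, hb]; ring]
          exact abs_of_nonneg (by positivity)
        rw [le_min_iff]
        refine ⟨?_, ?_⟩
        · calc (Real.sin a - Real.sin b) ^ 2 = |Real.sin a - Real.sin b| ^ 2 :=
              (sq_abs _).symm
            _ ≤ 2 ^ 2 := pow_le_pow_left₀ (abs_nonneg _) h2 2
            _ = 4 := by norm_num
        · have hle : |Real.sin a - Real.sin b| ≤ h * |ξ| := hlip.trans_eq hh2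
          calc (Real.sin a - Real.sin b) ^ 2 = |Real.sin a - Real.sin b| ^ 2 :=
              (sq_abs _).symm
            _ ≤ (h * |ξ|) ^ 2 := pow_le_pow_left₀ (abs_nonneg _) hle 2
            _ = h ^ 2 * ξ ^ 2 := by rw [mul_pow, sq_abs]
      have hrw : |ξ| ^ (α - 2) = |ξ| ^ α / ξ ^ 2 := by
        rw [Real.rpow_sub habs, hsq]
      rw [hrw, div_mul_eq_mul_div, ← mul_div_assoc]
      gcongr
  -- scaling identity
  have hscale : (∫⁻ ξ : ℝ, ENNReal.ofReal (min 4 (h ^ 2 * ξ ^ 2) * |ξ| ^ (α - 2)))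
      = ENNReal.ofReal (h ^ (1 - α)) *
        ∫⁻ η : ℝ, ENNReal.ofReal (min 4 (η ^ 2) * |η| ^ (α - 2)) := by
    have hmap : (∫⁻ ξ : ℝ, ENNReal.ofReal (min 4 ((h * ξ) ^ 2) * |h * ξ| ^ (α - 2)))
        = ENNReal.ofReal |h⁻¹| * ∫⁻ η : ℝ, ENNReal.ofReal (min 4 (η ^ 2) * |η| ^ (α - 2)) := by
      rw [← lintegral_map hgm (measurable_const_mul h), Real.map_volume_mul_left hh.ne',
        lintegral_smul_measure, smul_eq_mul]
    have hpteq : ∀ ξ : ℝ, ENNReal.ofReal (min 4 (h ^ 2 * ξ ^ 2) * |ξ| ^ (α - 2))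
        = ENNReal.ofReal (h ^ ((2:ℝ) - α)) *
          ENNReal.ofReal (min 4 ((h * ξ) ^ 2) * |h * ξ| ^ (α - 2)) := by
      intro ξ
      rw [← ENNReal.ofReal_mul (by positivity)]
      congr 1
      have h1 : |h * ξ| = h * |ξ| := by rw [abs_mul, abs_of_pos hh]
      have h2 : (h * |ξ|) ^ (α - 2) = h ^ (α - 2) * |ξ| ^ (α - 2) :=
        Real.mul_rpow hh.le (abs_nonneg ξ)
      rw [h1, h2, mul_pow]
      rw [show h ^ ((2:ℝ) - α) * (min 4 (h ^ 2 * ξ ^ 2) * (h ^ (α - 2) * |ξ| ^ (α - 2)))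
          = (h ^ ((2:ℝ) - α) * h ^ (α - 2)) * (min 4 (h ^ 2 * ξ ^ 2) * |ξ| ^ (α - 2)) by ring]
      rw [← Real.rpow_add hh]
      norm_num
    calc (∫⁻ ξ : ℝ, ENNReal.ofReal (min 4 (h ^ 2 * ξ ^ 2) * |ξ| ^ (α - 2)))
        = ∫⁻ ξ : ℝ, ENNReal.ofReal (h ^ ((2:ℝ) - α)) *
            ENNReal.ofReal (min 4 ((h * ξ) ^ 2) * |h * ξ| ^ (α - 2)) := by
          simp_rw [hpteq]
      _ = ENNReal.ofReal (h ^ ((2:ℝ) - α)) *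
            ∫⁻ ξ : ℝ, ENNReal.ofReal (min 4 ((h * ξ) ^ 2) * |h * ξ| ^ (α - 2)) := by
          rw [lintegral_const_mul' _ _ ENNReal.ofReal_ne_top]
      _ = ENNReal.ofReal (h ^ ((2:ℝ) - α)) * (ENNReal.ofReal |h⁻¹| *
            ∫⁻ η : ℝ, ENNReal.ofReal (min 4 (η ^ 2) * |η| ^ (α - 2))) := by rw [hmap]
      _ = ENNReal.ofReal (h ^ (1 - α)) *
            ∫⁻ η : ℝ, ENNReal.ofReal (min 4 (η ^ 2) * |η| ^ (α - 2)) := by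
          rw [← mul_assoc, ← ENNReal.ofReal_mul (by positivity)]
          congr 2
          rw [abs_of_pos (inv_pos.2 hh), show (h⁻¹ : ℝ) = h ^ (-1 : ℝ) by
            rw [Real.rpow_neg_one], ← Real.rpow_add hh,
            show (2:ℝ) - α + -1 = 1 - α by ring]
  -- min 4 ≤ 4 * min 1
  have hmin : (∫⁻ η : ℝ, ENNReal.ofReal (min 4 (η ^ 2) * |η| ^ (α - 2))) ≤ 4 * C₀ := by
    rw [hC₀, ← lintegral_const_mul' _ _ (by norm_num : (4:ℝ≥0∞) ≠ ⊤)]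
    refine lintegral_mono fun η => ?_
    show ENNReal.ofReal (min 4 (η ^ 2) * |η| ^ (α - 2))
      ≤ 4 * ENNReal.ofReal (min 1 (η ^ 2) * |η| ^ (α - 2))
    have hmin4 : min 4 (η ^ 2) ≤ 4 * min 1 (η ^ 2) := by
      rcases le_total (η ^ 2) 1 with hc | hc
      · rw [min_eq_right hc, min_eq_right (by linarith)]
        nlinarith [sq_nonneg η]
      · rw [min_eq_left hc, mul_one]
        exact min_le_left _ _
    have hr : min 4 (η ^ 2) * |η| ^ (α - 2) ≤ 4 * (min 1 (η ^ 2) * |η| ^ (α - 2)) := by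
      have := mul_le_mul_of_nonneg_right hmin4 (Real.rpow_nonneg (abs_nonneg η) (α - 2))
      linarith [this]
    refine le_trans (ENNReal.ofReal_le_ofReal hr) (le_of_eq ?_)
    rw [ENNReal.ofReal_mul (by norm_num : (0:ℝ) ≤ 4)]
    norm_num
  -- inner bound
  have hinner : ∀ t : ℝ, (∫⁻ ξ : ℝ,
      ENNReal.ofReal ((Real.sin ((t + h) * |ξ|) - Real.sin (t * |ξ|)) ^ 2 / ξ ^ 2 * |ξ| ^ α))
      ≤ ENNReal.ofReal (h ^ (1 - α)) * (4 * C₀) := by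
    intro t
    calc (∫⁻ ξ : ℝ, ENNReal.ofReal ((Real.sin ((t + h) * |ξ|) - Real.sin (t * |ξ|)) ^ 2 / ξ ^ 2
          * |ξ| ^ α))
        ≤ ∫⁻ ξ : ℝ, ENNReal.ofReal (min 4 (h ^ 2 * ξ ^ 2) * |ξ| ^ (α - 2)) :=
          lintegral_mono fun ξ => ENNReal.ofReal_le_ofReal (hpt t ξ)
      _ = ENNReal.ofReal (h ^ (1 - α)) *
            ∫⁻ η : ℝ, ENNReal.ofReal (min 4 (η ^ 2) * |η| ^ (α - 2)) := hscale
      _ ≤ ENNReal.ofReal (h ^ (1 - α)) * (4 * C₀) := by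
          exact mul_le_mul_right hmin _
  calc (∫⁻ t in Set.Ioc (0 : ℝ) T, ∫⁻ ξ : ℝ,
        ENNReal.ofReal ((Real.sin ((t + h) * |ξ|) - Real.sin (t * |ξ|)) ^ 2 / ξ ^ 2 * |ξ| ^ α))
      ≤ ∫⁻ _ in Set.Ioc (0 : ℝ) T, ENNReal.ofReal (h ^ (1 - α)) * (4 * C₀) :=
        lintegral_mono fun t => hinner t
    _ = ENNReal.ofReal (h ^ (1 - α)) * (4 * C₀) * volume (Set.Ioc (0:ℝ) T) := by
        rw [setLIntegral_const]
    _ = 4 * C₀ * ENNReal.ofReal (T * h ^ (1 - α)) := by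
        rw [Real.volume_Ioc, sub_zero, ENNReal.ofReal_mul hT.le]
        ring
end

section
/- For any H ∈ (0,1) and any t > 0, it holds that ∫_ℝ (sin(t·|ξ|))²/ξ² · |ξ|^{1−2H} dξ = 2^{2H} · C_{1−2H} · t^{2H}, where for α ∈ (−1,1) the constant C_α is defined by C_α = Γ(α)·sin(πα/2)/(1−α) for α ≠ 0 and C₀ = π/2. -/
open MeasureTheory Real Set Filter

lemma laplace_const {b : ℝ} (hb : 0 < b) :
    ∫ x in Ioi (0:ℝ), exp (-b * x) = b⁻¹ := by
  have h := integral_comp_mul_left_Ioi (fun x => exp (-x)) 0 hb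
  simp only [mul_zero, integral_exp_neg_Ioi_zero, smul_eq_mul, mul_one,
    abs_of_pos (inv_pos.mpr hb)] at h
  simpa [neg_mul] using h

lemma laplace_cos {b : ℝ} (hb : 0 < b) :
    ∫ x in Ioi (0:ℝ), exp (-b * x) * cos x = b / (1 + b ^ 2) := by
  have h1 : (0:ℝ) < 1 + b ^ 2 := by positivity
  set F : ℝ → ℝ := fun x => exp (-b * x) * (sin x - b * cos x) / (1 + b ^ 2) with hF
  have hderiv : ∀ x ∈ Ioi (0:ℝ), HasDerivAt F (exp (-b * x) * cos x) x := by
    intro x _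
    have h2 : HasDerivAt (fun x : ℝ => exp (-b * x)) (exp (-b * x) * (-b)) x :=
by
      simpa using ((hasDerivAt_id x).const_mul (-b)).exp
    have h3 : HasDerivAt (fun x : ℝ => sin x - b * cos x) (cos x + b * sin x) x := by
      have := (Real.hasDerivAt_sin x).sub ((Real.hasDerivAt_cos x).const_mul b)
      exact this.congr_deriv (by ring)
    have h4 := (h2.mul h3).div_const (1 + b ^ 2)
    refine h4.congr_deriv ?_
    rw [div_eq_iff h1.ne']
    ring
  have hint : IntegrableOn (fun x => exp (-b * x) * cos x) (Ioi (0:ℝ)) := by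
    refine (exp_neg_integrableOn_Ioi 0 hb).mono' ?_ ?_
    · exact ((Real.continuous_exp.comp (continuous_const.mul continuous_id)).mul
        Real.continuous_cos).aestronglyMeasurable
    · filter_upwards with x
      rw [norm_mul, Real.norm_eq_abs, Real.norm_eq_abs, abs_exp]
      nlinarith [abs_cos_le_one x, exp_pos (-b * x), abs_nonneg (cos x)]
  have htend : Tendsto F atTop (nhds 0) := by
    have he : Tendsto (fun x : ℝ => exp (-b * x)) atTop (nhds 0) := by
      have h6 : Tendsto (fun x : ℝ => -b * x) atTop atBot :=
        Tendsto.const_mul_atTop_of_neg (by linarith) tendsto_id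
      exact Real.tendsto_exp_atBot.comp h6
    have hb' : ∀ x : ℝ, |(sin x - b * cos x) / (1 + b ^ 2)| ≤ (1 + b) / (1 + b ^ 2) := by
      intro x
      rw [abs_div, abs_of_pos h1]
      gcongr
      calc |sin x - b * cos x| ≤ |sin x| + |b * cos x| := abs_sub _ _
        _ ≤ 1 + b := by
          have := abs_sin_le_one x
          have h5 : |b * cos x| ≤ b := by
            rw [abs_mul, abs_of_pos hb]
            nlinarith [abs_cos_le_one x]
          linarith
    have : Tendsto (fun x => exp (-b * x) * ((sin x - b * cos x) / (1 + b ^ 2))) atTop (nhds 0) := by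
      apply Tendsto.zero_mul_isBoundedUnder_le he
      exact isBoundedUnder_of ⟨(1 + b) / (1 + b ^ 2), fun x => hb' x⟩
    refine this.congr fun x => by rw [hF]; ring
  have hcont : ContinuousWithinAt F (Ici 0) 0 := by
    apply Continuous.continuousWithinAt
    fun_prop
  have := integral_Ioi_of_hasDerivAt_of_tendsto hcont hderiv hint htend
  rw [this, hF]
  simp
  ring

lemma rpow_two_eq (x : ℝ) : x ^ (2:ℝ) = x ^ (2:ℕ) := by
  rw [show ((2:ℝ)) = ((2:ℕ):ℝ) by norm_num, rpow_natCast]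

lemma lintegral_J {a : ℝ} (ha0 : 0 < a) (ha2 : a < 2) :
    ∫⁻ u in Ioi (0:ℝ), ENNReal.ofReal (u ^ (a - 1) / (1 + u ^ 2))
      = ENNReal.ofReal (π / (2 * sin (π * a / 2))) := by
  have key : ∀ u : ℝ, u ∈ Ioi (0:ℝ) →
      ENNReal.ofReal (u ^ (a - 1) / (1 + u ^ 2))
        = ∫⁻ v in Ioi (0:ℝ), ENNReal.ofReal (u ^ (a-1) * exp (-(1 + u ^ 2) * v)) := by
    intro u hu
    have hpos : (0:ℝ) < 1 + u ^ 2 := by positivity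
    have hint : Integrable (fun v => u ^ (a-1) * exp (-(1 + u ^ 2) * v))
        (volume.restrict (Ioi (0:ℝ))) := (exp_neg_integrableOn_Ioi 0 hpos).const_mul _
    rw [← ofReal_integral_eq_lintegral_ofReal hint ?_]
    · rw [integral_const_mul, laplace_const hpos, div_eq_mul_inv]
    · have hu' : (0:ℝ) < u := hu
      filter_upwards with v
      positivity
  rw [setLIntegral_congr_fun measurableSet_Ioi key]
  have hmeas : AEMeasurable (Function.uncurry fun u v : ℝ =>
      ENNReal.ofReal (u ^ (a-1) * exp (-(1 + u ^ 2) * v)))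
      ((volume.restrict (Ioi (0:ℝ))).prod (volume.restrict (Ioi (0:ℝ)))) := by
    apply Measurable.aemeasurable
    apply Measurable.ennreal_ofReal
    fun_prop
  rw [lintegral_lintegral_swap hmeas]
  have inner : ∀ v : ℝ, v ∈ Ioi (0:ℝ) →
      (∫⁻ u in Ioi (0:ℝ), ENNReal.ofReal (u ^ (a-1) * exp (-(1 + u ^ 2) * v)))
        = ENNReal.ofReal (exp (-v) * v ^ (-(a/2)) * ((1/2) * Gamma (a/2))) := by
    intro v hv
    have hv' : (0:ℝ) < v := hv
    have heq : ∀ u : ℝ, u ^ (a-1) * exp (-(1 + u ^ 2) * v)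
        = exp (-v) * (u ^ (a-1) * exp (-v * u ^ (2:ℕ))) := by
      intro u
      rw [show -(1 + u ^ 2) * v = -v + -v * u ^ 2 by ring, exp_add]
      ring
    simp_rw [heq]
    have hint : Integrable (fun u => u ^ (a-1) * exp (-v * u ^ (2:ℕ)))
        (volume.restrict (Ioi (0:ℝ))) := by
      have := integrableOn_rpow_mul_exp_neg_mul_sq hv' (show (-1:ℝ) < a - 1 by linarith)
      exact this
    rw [← ofReal_integral_eq_lintegral_ofReal (hint.const_mul _) ?_]
    · congr 1
      rw [integral_const_mul]
      have := integral_rpow_mul_exp_neg_mul_rpow (p := 2) (q := a - 1)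
        (show (0:ℝ) < 2 by norm_num) (show (-1:ℝ) < a - 1 by linarith) hv'
      rw [show ∫ u in Ioi (0:ℝ), u ^ (a-1) * exp (-v * u ^ (2:ℕ))
          = ∫ x in Ioi (0:ℝ), x ^ (a - 1) * exp (-v * x ^ (2:ℝ)) by
        refine setIntegral_congr_fun measurableSet_Ioi fun x _ => by rw [rpow_two_eq], this]
      rw [show -(a - 1 + 1) / 2 = -(a/2) by ring, show (a - 1 + 1) / 2 = a/2 by ring]
      ring
    · filter_upwards [ae_restrict_mem measurableSet_Ioi] with u hu
      have : (0:ℝ) < u := hu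
      positivity
  rw [setLIntegral_congr_fun measurableSet_Ioi inner]
  have hGint : Integrable (fun v : ℝ => exp (-v) * v ^ (-(a/2)) * ((1/2) * Gamma (a/2)))
      (volume.restrict (Ioi (0:ℝ))) := by
    have h := (Real.GammaIntegral_convergent (show (0:ℝ) < 1 - a/2 by linarith))
    have h2 : IntegrableOn (fun v : ℝ => exp (-v) * v ^ (-(a/2))) (Ioi (0:ℝ)) := by
      refine h.congr_fun (fun v _ => by norm_num) measurableSet_Ioi
    exact h2.mul_const _
  rw [← ofReal_integral_eq_lintegral_ofReal hGint ?_]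
  · congr 1
    rw [integral_mul_const]
    have : ∫ v in Ioi (0:ℝ), exp (-v) * v ^ (-(a/2))
        = ∫ v in Ioi (0:ℝ), exp (-v) * v ^ (1 - a/2 - 1) := by
      refine setIntegral_congr_fun measurableSet_Ioi fun v _ => by norm_num
    rw [this, ← Real.Gamma_eq_integral (show (0:ℝ) < 1 - a/2 by linarith)]
    have hrefl := Real.Gamma_mul_Gamma_one_sub (a/2)
    have : Gamma (1 - a/2) * ((1/2) * Gamma (a/2)) = (1/2) * (π / sin (π * (a/2))) := by
      rw [← hrefl]; ring
    rw [this]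
    rw [show π * (a/2) = π * a / 2 by ring]
    ring
  · filter_upwards [ae_restrict_mem measurableSet_Ioi] with v hv
    have : (0:ℝ) < v := hv
    positivity

lemma laplace_cos_int {b : ℝ} (hb : 0 < b) :
    IntegrableOn (fun x => exp (-b * x) * cos x) (Ioi (0:ℝ)) := by
  refine (exp_neg_integrableOn_Ioi 0 hb).mono' ?_ ?_
  · exact ((Real.continuous_exp.comp (continuous_const.mul continuous_id)).mul
      Real.continuous_cos).aestronglyMeasurable
  · filter_upwards with x
    rw [norm_mul, Real.norm_eq_abs, Real.norm_eq_abs, abs_exp]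
    nlinarith [abs_cos_le_one x, exp_pos (-b * x), abs_nonneg (cos x)]

lemma laplace_one_sub_cos_int {b : ℝ} (hb : 0 < b) :
    IntegrableOn (fun x => (1 - cos x) * exp (-b * x)) (Ioi (0:ℝ)) := by
  have h := (exp_neg_integrableOn_Ioi 0 hb).sub (laplace_cos_int hb)
  exact h.congr (ae_of_all _ fun x => by simp only [Pi.sub_apply]; ring)

lemma laplace_one_sub_cos {b : ℝ} (hb : 0 < b) :
    ∫ x in Ioi (0:ℝ), (1 - cos x) * exp (-b * x) = b⁻¹ - b / (1 + b ^ 2) := by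
  have heq : ∀ x : ℝ, (1 - cos x) * exp (-b * x) = exp (-b * x) - exp (-b * x) * cos x :=
    fun x => by ring
  rw [setIntegral_congr_fun measurableSet_Ioi (fun x _ => heq x),
    integral_sub (exp_neg_integrableOn_Ioi 0 hb) (laplace_cos_int hb),
    laplace_const hb, laplace_cos hb]

lemma lintegral_D {s : ℝ} (hs0 : -2 < s) (hs2 : s < 0) :
    ∫⁻ x in Ioi (0:ℝ), ENNReal.ofReal ((1 - cos x) * x ^ (s - 1))
      = ENNReal.ofReal ((Gamma (1 - s))⁻¹ * (π / (2 * sin (π * (-s) / 2)))) := by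
  have hG : (0:ℝ) < Gamma (1 - s) := Gamma_pos_of_pos (by linarith)
  set c : ℝ := (Gamma (1 - s))⁻¹ with hc
  have hc0 : (0:ℝ) ≤ c := le_of_lt (inv_pos.mpr hG)
  -- pointwise representation
  have key : ∀ x : ℝ, x ∈ Ioi (0:ℝ) →
      ENNReal.ofReal ((1 - cos x) * x ^ (s - 1))
        = ∫⁻ l in Ioi (0:ℝ), ENNReal.ofReal (c * ((1 - cos x) * (l ^ (-s) * exp (-x * l)))) := by
    intro x hx
    have hx' : (0:ℝ) < x := hx
    have hcos : (0:ℝ) ≤ 1 - cos x := by nlinarith [cos_le_one x]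
    have hint : Integrable (fun l : ℝ => l ^ (-s) * exp (-x * l))
        (volume.restrict (Ioi (0:ℝ))) := by
      have h := integrableOn_rpow_mul_exp_neg_mul_rpow (p := 1) (s := -s) (b := x)
        (by linarith) one_pos hx'
      exact h.congr_fun (fun l _ => by simp only [rpow_one]) measurableSet_Ioi
    have hval : ∫ l in Ioi (0:ℝ), l ^ (-s) * exp (-x * l) = x ^ (s - 1) * Gamma (1 - s) := by
      have h := integral_rpow_mul_exp_neg_mul_rpow (p := 1) (q := -s) (b := x)
        (by norm_num) (by linarith) hx'
      rw [show ∫ l in Ioi (0:ℝ), l ^ (-s) * exp (-x * l)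
          = ∫ l in Ioi (0:ℝ), l ^ (-s) * exp (-x * l ^ (1:ℝ)) by
        refine setIntegral_congr_fun measurableSet_Ioi fun l _ => by rw [rpow_one], h]
      rw [show -(-s + 1) / 1 = s - 1 by ring, show (-s + 1) / 1 = 1 - s by ring]
      ring
    have hint2 : Integrable (fun l : ℝ => c * ((1 - cos x) * (l ^ (-s) * exp (-x * l))))
        (volume.restrict (Ioi (0:ℝ))) := (hint.const_mul _).const_mul _
    rw [← ofReal_integral_eq_lintegral_ofReal hint2 ?_]
    · congr 1
      rw [integral_const_mul, integral_const_mul, hval, hc]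
      field_simp
    · filter_upwards [ae_restrict_mem measurableSet_Ioi] with l hl
      have : (0:ℝ) < l := hl
      positivity
  rw [setLIntegral_congr_fun measurableSet_Ioi key]
  have hmeas : AEMeasurable (Function.uncurry fun x l : ℝ =>
      ENNReal.ofReal (c * ((1 - cos x) * (l ^ (-s) * exp (-x * l)))))
      ((volume.restrict (Ioi (0:ℝ))).prod (volume.restrict (Ioi (0:ℝ)))) := by
    apply Measurable.aemeasurable
    apply Measurable.ennreal_ofReal
    fun_prop
  rw [lintegral_lintegral_swap hmeas]
  have inner : ∀ l : ℝ, l ∈ Ioi (0:ℝ) →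
      (∫⁻ x in Ioi (0:ℝ), ENNReal.ofReal (c * ((1 - cos x) * (l ^ (-s) * exp (-x * l)))))
        = ENNReal.ofReal (c * (l ^ (-s - 1) / (1 + l ^ 2))) := by
    intro l hl
    have hl' : (0:ℝ) < l := hl
    have heq : ∀ x : ℝ, c * ((1 - cos x) * (l ^ (-s) * exp (-x * l)))
        = (c * l ^ (-s)) * ((1 - cos x) * exp (-l * x)) := by
      intro x; rw [show (-x*l : ℝ) = -l*x by ring]; ring
    simp_rw [heq]
    have hint : Integrable (fun x : ℝ => (c * l ^ (-s)) * ((1 - cos x) * exp (-l * x)))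
        (volume.restrict (Ioi (0:ℝ))) := (laplace_one_sub_cos_int hl').const_mul _
    rw [← ofReal_integral_eq_lintegral_ofReal hint ?_]
    · congr 1
      rw [integral_const_mul, laplace_one_sub_cos hl']
      rw [show -s - 1 = -s - (1:ℝ) from rfl, rpow_sub hl', rpow_one]
      field_simp
      ring
    · filter_upwards with x
      have hcos : (0:ℝ) ≤ 1 - cos x := by nlinarith [cos_le_one x]
      have h1 : (0:ℝ) ≤ l ^ (-s) := (rpow_pos_of_pos hl' _).le
      positivity
  rw [setLIntegral_congr_fun measurableSet_Ioi inner]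
  simp_rw [ENNReal.ofReal_mul hc0]
  rw [lintegral_const_mul' _ _ ENNReal.ofReal_ne_top]
  rw [show ∫⁻ l in Ioi (0:ℝ), ENNReal.ofReal (l ^ (-s - 1) / (1 + l ^ 2))
      = ∫⁻ l in Ioi (0:ℝ), ENNReal.ofReal (l ^ (-s - 1) / (1 + l ^ 2)) from rfl]
  have hJ := lintegral_J (a := -s) (by linarith) (by linarith)
  rw [show (-s) - 1 = -s - 1 from rfl] at hJ
  rw [hJ, ← ENNReal.ofReal_mul hc0]

lemma integrableOn_g0 {s : ℝ} (hs0 : -2 < s) (hs2 : s < 0) :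
    IntegrableOn (fun x : ℝ => (1 - cos x) * x ^ (s - 1)) (Ioi (0:ℝ)) := by
  have hmeas : Measurable (fun x : ℝ => (1 - cos x) * x ^ (s - 1)) := by fun_prop
  have h1 : IntegrableOn (fun x : ℝ => (1 - cos x) * x ^ (s - 1)) (Ioc (0:ℝ) 1) := by
    have hdom : IntegrableOn (fun x : ℝ => (1/2 : ℝ) * x ^ (s + 1)) (Ioc (0:ℝ) 1) := by
      have := (intervalIntegral.intervalIntegrable_rpow' (show (-1:ℝ) < s + 1 by linarith) (a := 0) (b := 1))
      rw [intervalIntegrable_iff_integrableOn_Ioc_of_le (by norm_num : (0:ℝ) ≤ 1)] at this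
      exact this.const_mul _
    refine hdom.mono' hmeas.aestronglyMeasurable ?_
    filter_upwards [ae_restrict_mem measurableSet_Ioc] with x hx
    have hx0 : (0:ℝ) < x := hx.1
    have hcos : (0:ℝ) ≤ 1 - cos x := by nlinarith [cos_le_one x]
    have hcos2 : 1 - cos x ≤ x ^ 2 / 2 := by nlinarith [one_sub_sq_div_two_le_cos (x := x)]
    rw [Real.norm_eq_abs, abs_mul, abs_of_nonneg hcos,
      abs_of_nonneg (rpow_nonneg hx0.le _)]
    have hxp : x ^ (s + 1) = x ^ (2:ℕ) * x ^ (s - 1) := by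
      rw [← rpow_natCast x 2, ← rpow_add hx0]
      norm_num
      ring_nf
    calc (1 - cos x) * x ^ (s - 1) ≤ (x ^ 2 / 2) * x ^ (s - 1) := by
          have := rpow_nonneg hx0.le (s - 1)
          nlinarith
      _ = 1/2 * x ^ (s + 1) := by rw [hxp]; ring
  have h2 : IntegrableOn (fun x : ℝ => (1 - cos x) * x ^ (s - 1)) (Ioi (1:ℝ)) := by
    have hdom : IntegrableOn (fun x : ℝ => (2:ℝ) * x ^ (s - 1)) (Ioi (1:ℝ)) :=
      (integrableOn_Ioi_rpow_of_lt (by linarith) one_pos).const_mul _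
    refine hdom.mono' hmeas.aestronglyMeasurable ?_
    filter_upwards [ae_restrict_mem measurableSet_Ioi] with x hx
    have hx0 : (0:ℝ) < x := lt_trans one_pos hx
    have hcos : (0:ℝ) ≤ 1 - cos x := by nlinarith [cos_le_one x]
    rw [Real.norm_eq_abs, abs_mul, abs_of_nonneg hcos,
      abs_of_nonneg (rpow_nonneg hx0.le _)]
    have := rpow_nonneg hx0.le (s - 1)
    nlinarith [neg_one_le_cos x]
  have := h1.union h2
  rwa [Ioc_union_Ioi_eq_Ioi (by norm_num : (0:ℝ) ≤ 1)] at this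

/-- For `H ∈ (0,1)` and `t > 0`:
`∫_ℝ sin²(t|ξ|)/ξ² |ξ|^{1-2H} dξ = 2^{2H} C_{1-2H} t^{2H}`, where
`C_α = Γ(α) sin(πα/2)/(1-α)` for `α ≠ 0` and `C_0 = π/2`. -/
theorem wave_spectral_identity (H : ℝ) (hH : H ∈ Set.Ioo (0 : ℝ) 1) (t : ℝ) (ht : 0 < t) :
    (∫⁻ ξ : ℝ, ENNReal.ofReal ((Real.sin (t * |ξ|)) ^ 2 / ξ ^ 2 * |ξ| ^ (1 - 2 * H)))
      = ENNReal.ofReal ((2 : ℝ) ^ (2 * H) *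
          (if (1 - 2 * H : ℝ) = 0 then Real.pi / 2
            else Real.Gamma (1 - 2 * H) * Real.sin (Real.pi * (1 - 2 * H) / 2) /
              (1 - (1 - 2 * H))) * t ^ (2 * H)) := by
  obtain ⟨hH0, hH1⟩ := hH
  have h2t : (0:ℝ) < 2 * t := by linarith
  have hsinH : (0:ℝ) < sin (π * H) :=
    sin_pos_of_pos_of_lt_pi (by positivity) (by nlinarith [pi_pos])
  have hG1 : (0:ℝ) < Gamma (1 + 2 * H) := Gamma_pos_of_pos (by linarith)
  -- the one-dimensional integral
  have hD := lintegral_D (s := -(2 * H)) (by linarith) (by linarith)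
  rw [show (1 : ℝ) - -(2 * H) = 1 + 2 * H by ring,
    show π * (-(-(2 * H))) / 2 = π * H by ring] at hD
  have hg0int := integrableOn_g0 (s := -(2 * H)) (by linarith) (by linarith)
  have hKnn : (0:ℝ) ≤ (Gamma (1 + 2 * H))⁻¹ * (π / (2 * sin (π * H))) := by positivity
  have hg0nn : ∀ x : ℝ, x ∈ Ioi (0:ℝ) → 0 ≤ (1 - cos x) * x ^ (-(2 * H) - 1) := by
    intro x hx
    have hx0 : (0:ℝ) < x := hx
    have := cos_le_one x
    exact mul_nonneg (by linarith) (rpow_nonneg hx0.le _)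
  have hKval : ∫ x in Ioi (0:ℝ), (1 - cos x) * x ^ (-(2 * H) - 1)
      = (Gamma (1 + 2 * H))⁻¹ * (π / (2 * sin (π * H))) := by
    have h1 : ENNReal.ofReal (∫ x in Ioi (0:ℝ), (1 - cos x) * x ^ (-(2 * H) - 1))
        = ENNReal.ofReal ((Gamma (1 + 2 * H))⁻¹ * (π / (2 * sin (π * H)))) := by
      rw [ofReal_integral_eq_lintegral_ofReal hg0int ?_]
      · exact hD
      · filter_upwards [ae_restrict_mem measurableSet_Ioi] with x hx using hg0nn x hx
    exact (ENNReal.ofReal_eq_ofReal_iff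
      (setIntegral_nonneg measurableSet_Ioi hg0nn) hKnn).mp h1
  -- pointwise relation between g and g0
  have hgcomp : ∀ x ∈ Ioi (0:ℝ), sin (t * x) ^ 2 / x ^ 2 * x ^ (1 - 2 * H)
      = ((1/2) * (2 * t) ^ (1 + 2 * H))
        * ((1 - cos (2 * t * x)) * (2 * t * x) ^ (-(2 * H) - 1)) := by
    intro x hx
    have hx0 : (0:ℝ) < x := hx
    rw [sin_sq_eq_half_sub, show 2 * (t * x) = 2 * t * x by ring,
      mul_rpow h2t.le hx0.le]
    have hx1 : x ^ (1 - 2 * H) = x ^ (-(2 * H) - 1) * x ^ (2:ℕ) := by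
      rw [← rpow_natCast x 2, ← rpow_add hx0]
      norm_num
      ring_nf
    have h3 : (2 * t) ^ (1 + 2 * H) * (2 * t) ^ (-(2 * H) - 1) = 1 := by
      rw [← rpow_add h2t, show (1 + 2 * H + (-(2 * H) - 1)) = (0:ℝ) by ring, rpow_zero]
    rw [hx1]
    have hx2 : (x:ℝ) ^ (2:ℕ) ≠ 0 := by positivity
    rw [show (1/2 : ℝ) * (2 * t) ^ (1 + 2 * H)
        * ((1 - cos (2 * t * x)) * ((2 * t) ^ (-(2 * H) - 1) * x ^ (-(2 * H) - 1)))
        = ((2 * t) ^ (1 + 2 * H) * (2 * t) ^ (-(2 * H) - 1))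
          * ((1/2) * (1 - cos (2 * t * x)) * x ^ (-(2 * H) - 1)) by ring, h3, one_mul]
    field_simp
  -- integrability of g on Ioi 0
  have hcomp : IntegrableOn (fun x : ℝ => (1 - cos (2 * t * x)) * (2 * t * x) ^ (-(2 * H) - 1))
      (Ioi (0:ℝ)) := by
    have h := (integrableOn_Ioi_comp_mul_left_iff
      (fun x : ℝ => (1 - cos x) * x ^ (-(2 * H) - 1)) 0 h2t).mpr
      (by rwa [mul_zero])
    exact h
  have hgint : IntegrableOn (fun x : ℝ => sin (t * x) ^ 2 / x ^ 2 * x ^ (1 - 2 * H))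
      (Ioi (0:ℝ)) :=
    IntegrableOn.congr_fun (hcomp.const_mul ((1/2) * (2 * t) ^ (1 + 2 * H)))
      (fun x hx => (hgcomp x hx).symm) measurableSet_Ioi
  -- value on Ioi 0
  have hIval : ∫ x in Ioi (0:ℝ), sin (t * x) ^ 2 / x ^ 2 * x ^ (1 - 2 * H)
      = (1/2) * (2 * t) ^ (1 + 2 * H)
        * ((2 * t)⁻¹ * ((Gamma (1 + 2 * H))⁻¹ * (π / (2 * sin (π * H))))) := by
    rw [setIntegral_congr_fun measurableSet_Ioi hgcomp, integral_const_mul]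
    congr 1
    have h := integral_comp_mul_left_Ioi
      (fun x : ℝ => (1 - cos x) * x ^ (-(2 * H) - 1)) 0 h2t
    rw [mul_zero] at h
    rw [h, hKval, smul_eq_mul]
  -- integrability of g ∘ abs on ℝ
  have hIoiAbs : IntegrableOn
      (fun x : ℝ => sin (t * |x|) ^ 2 / |x| ^ 2 * |x| ^ (1 - 2 * H)) (Ioi (0:ℝ)) :=
    hgint.congr_fun (fun x hx => by rw [abs_of_pos hx]) measurableSet_Ioi
  have hAbs : Integrable (fun x : ℝ => sin (t * |x|) ^ 2 / |x| ^ 2 * |x| ^ (1 - 2 * H)) := by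
    have hIic : IntegrableOn
        (fun x : ℝ => sin (t * |x|) ^ 2 / |x| ^ 2 * |x| ^ (1 - 2 * H)) (Iic (0:ℝ)) := by
      rw [← Measure.map_neg_eq_self (volume : Measure ℝ)]
      have m : MeasurableEmbedding fun x : ℝ => -x := (Homeomorph.neg ℝ).measurableEmbedding
      rw [m.integrableOn_map_iff]
      simp_rw [Function.comp_def, abs_neg, neg_preimage, neg_Iic, neg_zero]
      exact (integrableOn_Ici_iff_integrableOn_Ioi).mpr hIoiAbs
    have h := hIic.union hIoiAbs
    rwa [Iic_union_Ioi, integrableOn_univ] at h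
  -- convert LHS
  have hnn : ∀ ξ : ℝ, 0 ≤ sin (t * |ξ|) ^ 2 / |ξ| ^ 2 * |ξ| ^ (1 - 2 * H) := fun ξ =>
    mul_nonneg (div_nonneg (sq_nonneg _) (sq_nonneg _)) (rpow_nonneg (abs_nonneg _) _)
  calc ∫⁻ ξ : ℝ, ENNReal.ofReal (sin (t * |ξ|) ^ 2 / ξ ^ 2 * |ξ| ^ (1 - 2 * H))
      = ∫⁻ ξ : ℝ, ENNReal.ofReal (sin (t * |ξ|) ^ 2 / |ξ| ^ 2 * |ξ| ^ (1 - 2 * H)) := by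
        refine lintegral_congr fun ξ => congrArg _ ?_
        rw [sq_abs]
    _ = ENNReal.ofReal (∫ ξ : ℝ, sin (t * |ξ|) ^ 2 / |ξ| ^ 2 * |ξ| ^ (1 - 2 * H)) :=
        (ofReal_integral_eq_lintegral_ofReal hAbs (ae_of_all _ hnn)).symm
    _ = ENNReal.ofReal (2 * ∫ x in Ioi (0:ℝ), sin (t * x) ^ 2 / x ^ 2 * x ^ (1 - 2 * H)) := by
        rw [integral_comp_abs (f := fun x => sin (t * x) ^ 2 / x ^ 2 * x ^ (1 - 2 * H))]
    _ = ENNReal.ofReal ((2 : ℝ) ^ (2 * H) *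
          (if (1 - 2 * H : ℝ) = 0 then π / 2
            else Gamma (1 - 2 * H) * sin (π * (1 - 2 * H) / 2) / (1 - (1 - 2 * H)))
          * t ^ (2 * H)) := by
        rw [hIval]
        congr 1
        have hsplit : (2 * t) ^ (1 + 2 * H) = (2 * t) * ((2:ℝ) ^ (2 * H) * t ^ (2 * H)) := by
          rw [rpow_add h2t, rpow_one, mul_rpow (by norm_num) ht.le]
        have hconst : (Gamma (1 + 2 * H))⁻¹ * (π / (2 * sin (π * H)))
            = (if (1 - 2 * H : ℝ) = 0 then π / 2
              else Gamma (1 - 2 * H) * sin (π * (1 - 2 * H) / 2) / (1 - (1 - 2 * H))) := by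
          split_ifs with hα
          · have h12 : H = 1/2 := by linarith
            rw [h12, show (1:ℝ) + 2 * (1/2) = 2 by norm_num,
              show π * (1/2 : ℝ) = π / 2 by ring, Real.Gamma_two, Real.sin_pi_div_two]
            norm_num
          · have h2H1 : 2 * H ≠ 1 := fun h => hα (by linarith)
            have hcos : cos (π * H) ≠ 0 := by
              rw [Real.cos_ne_zero_iff]
              intro k heq
              have hpi : (π:ℝ) ≠ 0 := pi_pos.ne'
              have hk : (2 * (k:ℝ) + 1) = 2 * H := by
                have h2 : π * H * 2 = (2 * (k:ℝ) + 1) * π := by linarith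
                have := mul_right_cancel₀ hpi (by linarith [h2] : (2 * (k:ℝ) + 1) * π = (2 * H) * π)
                linarith
              have hk1 : (-1 : ℝ) < (k:ℝ) := by linarith
              have hk2 : ((k:ℝ)) < 1 := by linarith
              have hk0 : k = 0 := by
                have h1 : (-1 : ℤ) < k := by exact_mod_cast hk1
                have h2 : k < 1 := by exact_mod_cast hk2
                omega
              rw [hk0] at hk
              norm_num at hk
              exact h2H1 hk.symm
            have hrefl' : Gamma (2 * H) * Gamma (1 - 2 * H)
                * (2 * sin (π * H) * cos (π * H)) = π := by
              have hrefl := Real.Gamma_mul_Gamma_one_sub (2 * H)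
              rw [show π * (2 * H) = 2 * (π * H) by ring, sin_two_mul] at hrefl
              rw [hrefl]
              field_simp
            have hΓ2H : (0:ℝ) < Gamma (2 * H) := Gamma_pos_of_pos (by linarith)
            have hΓadd : Gamma (1 + 2 * H) = 2 * H * Gamma (2 * H) := by
              rw [add_comm]; exact Real.Gamma_add_one (by linarith)
            have hsineq : sin (π * (1 - 2 * H) / 2) = cos (π * H) := by
              rw [show π * (1 - 2 * H) / 2 = π / 2 - π * H by ring, Real.sin_pi_div_two_sub]
            rw [hsineq, hΓadd, show (1:ℝ) - (1 - 2 * H) = 2 * H by ring]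
            have hpd : π / (2 * sin (π * H)) = Gamma (2 * H) * Gamma (1 - 2 * H) * cos (π * H) := by
              rw [div_eq_iff (mul_pos two_pos hsinH).ne']
              linear_combination -hrefl'
            rw [hpd]
            field_simp
        rw [← hconst, hsplit]
        field_simp
end

section
/- Let n ≥ 1 and let f₁, …, f_n : ℝ → ℝ be integrable functions. Fix x ∈ ℝ and set x_{n+1} := x. Then for all (ξ₁, …, ξ_n) ∈ ℝⁿ, ∫_{ℝⁿ} exp(−i(ξ₁x₁ + ⋯ + ξ_n x_n)) · ∏_{ℓ=1}^{n} f_ℓ(x_{ℓ+1} − x_ℓ) dx₁ ⋯ dx_n = exp(−i(ξ₁ + ⋯ + ξ_n)x) · ∏_{ℓ=1}^{n} conj( 𝓕f_ℓ(ξ₁ + ⋯ + ξ_ℓ) ), where 𝓕f(ζ) = ∫_ℝ e^{−iζy} f(y) dy and conj denotes complex conjugation. -/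
/-!
Substitute `u_ℓ = x_{ℓ+1} - x_ℓ`. Its inverse `x_ℓ = x - ∑_{m ≥ ℓ} u_m` is affine with triangular
linear part of determinant `±1`, hence preserves Lebesgue measure. Summation by parts gives
`∑_ℓ ξ_ℓ x_ℓ = (∑_ℓ ξ_ℓ) x - ∑_m (ξ_1 + ⋯ + ξ_m) u_m`, so in the new variables the integrand is
a constant times a product of functions of one variable each, and Fubini splits the integral into
one-dimensional Fourier integrals; the sign flip in the exponent is the complex conjugation.
-/

open MeasureTheory Complex

section ChainOfIncrements

variable {ι : Type*} [Fintype ι] [LinearOrder ι] [LocallyFiniteOrderTop ι]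

def chainOfIncrements (x : ℝ) (u : ι → ℝ) (ℓ : ι) : ℝ :=
  x - ∑ m ∈ Finset.Ici ℓ, u m

theorem measurePreserving_chainOfIncrements (x : ℝ) :
    MeasurePreserving (chainOfIncrements (ι := ι) x) := by
  classical
  set M : Matrix ι ι ℝ := fun ℓ m => if ℓ ≤ m then -1 else 0
  have hM_det : M.det = (-1) ^ Fintype.card ι := by
    rw [Matrix.det_of_isUpperTriangular (M := M) fun ℓ m hml => if_neg (not_le.mpr hml)]
    simp [M]
  have hM : MeasurePreserving (Matrix.toLin' M) :=
    ⟨(LinearMap.continuous_on_pi _).measurable, by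
      rw [Real.map_matrix_volume_pi_eq_smul_volume_pi (by simp [hM_det]), hM_det]
      simp⟩
  have h_eq : chainOfIncrements x = (· + fun _ => x) ∘ Matrix.toLin' M := by
    funext u ℓ
    rw [Function.comp_apply, Pi.add_apply, Matrix.toLin'_apply]
    simp [chainOfIncrements, M, Matrix.mulVec, dotProduct, ← Finset.filter_le_eq_Ici,
      Finset.sum_filter, sub_eq_neg_add, ← Finset.sum_neg_distrib, apply_ite]
  rw [h_eq]
  exact (measurePreserving_add_right volume fun _ => x).comp hM

variable [LocallyFiniteOrderBot ι]

theorem sum_mul_chainOfIncrements (ξ u : ι → ℝ) (x : ℝ) :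
    ∑ ℓ, ξ ℓ * chainOfIncrements x u ℓ
      = (∑ ℓ, ξ ℓ) * x - ∑ m, (∑ ℓ ∈ Finset.Iic m, ξ ℓ) * u m := by
  simp_rw [chainOfIncrements, mul_sub, Finset.sum_sub_distrib, ← Finset.sum_mul, Finset.mul_sum,
    Finset.sum_mul]
  congr 1
  exact Finset.sum_comm' fun ℓ m => by simp

theorem exp_neg_sum_mul_chainOfIncrements_mul_I (ξ u : ι → ℝ) (x : ℝ) :
    Complex.exp (-(↑(∑ ℓ, ξ ℓ * chainOfIncrements x u ℓ) : ℂ) * I)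
      = Complex.exp (-(↑(∑ ℓ, ξ ℓ) : ℂ) * ↑x * I) *
          ∏ m, Complex.exp ((↑(∑ ℓ ∈ Finset.Iic m, ξ ℓ) : ℂ) * ↑(u m) * I) := by
  rw [sum_mul_chainOfIncrements, ← Complex.exp_sum, ← Finset.sum_mul, ← Complex.exp_add]
  congr 1
  push_cast
  ring

end ChainOfIncrements

theorem chainOfIncrements_succ_sub {n : ℕ} (x : ℝ) (u : Fin n → ℝ) (ℓ : Fin n) :
    (if h : (ℓ : ℕ) + 1 < n then chainOfIncrements x u ⟨ℓ + 1, h⟩ else x)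
      - chainOfIncrements x u ℓ = u ℓ := by
  have h_Ici : chainOfIncrements x u ℓ = x - (u ℓ + ∑ m ∈ Finset.Ioi ℓ, u m) := by
    rw [chainOfIncrements, ← Finset.Ioi_insert, Finset.sum_insert Finset.notMem_Ioi_self]
  rw [h_Ici]
  split_ifs with h
  · have h_Ioi : Finset.Ioi ℓ = Finset.Ici ⟨ℓ + 1, h⟩ := by
      ext m
      simp only [Finset.mem_Ioi, Finset.mem_Ici, Fin.lt_def, Fin.le_def]
      omega
    rw [chainOfIncrements, h_Ioi]
    ring
  · have h_Ioi : Finset.Ioi ℓ = ∅ := by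
      ext m
      simp only [Finset.mem_Ioi, Fin.lt_def, Finset.notMem_empty, iff_false]
      omega
    simp [h_Ioi]

theorem chainOfIncrements_injective {n : ℕ} (x : ℝ) :
    Function.Injective (chainOfIncrements (ι := Fin n) x) := fun u u' h => by
  funext ℓ
  rw [← chainOfIncrements_succ_sub x u ℓ, ← chainOfIncrements_succ_sub x u' ℓ, h]

theorem conj_integral_exp_neg_mul_I_mul_ofReal {μ : Measure ℝ} (g : ℝ → ℝ) (ζ : ℝ) :
    starRingEnd ℂ (∫ y : ℝ, Complex.exp (-(ζ : ℂ) * y * I) * g y ∂μ)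
      = ∫ y : ℝ, Complex.exp ((ζ : ℂ) * y * I) * g y ∂μ := by
  rw [← integral_conj]
  congr 1 with y
  simp [← Complex.exp_conj]

theorem fourier_chained_kernel_general (n : ℕ) (f : Fin n → ℝ → ℝ)
    (x : ℝ) (ξ : Fin n → ℝ) :
    (∫ v : Fin n → ℝ,
        Complex.exp (-(↑(∑ ℓ, ξ ℓ * v ℓ) : ℂ) * Complex.I) *
          ∏ ℓ : Fin n,
            (↑(f ℓ ((if h : (ℓ : ℕ) + 1 < n then v ⟨(ℓ : ℕ) + 1, h⟩ else x) - v ℓ)) : ℂ))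
      = Complex.exp (-(↑(∑ ℓ, ξ ℓ) : ℂ) * ↑x * Complex.I) *
          ∏ ℓ : Fin n,
            (starRingEnd ℂ)
              (∫ y : ℝ,
                Complex.exp (-(↑(∑ m ∈ Finset.Iic ℓ, ξ m) : ℂ) * ↑y * Complex.I) *
                  (↑(f ℓ y) : ℂ)) := by
  have hT := measurePreserving_chainOfIncrements (ι := Fin n) x
  rw [← hT.integral_comp (hT.measurable.measurableEmbedding (chainOfIncrements_injective x))]
  simp_rw [conj_integral_exp_neg_mul_I_mul_ofReal, chainOfIncrements_succ_sub,
    exp_neg_sum_mul_chainOfIncrements_mul_I, mul_assoc, ← Finset.prod_mul_distrib]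
  rw [integral_const_mul]
  congr 1
  exact integral_fintype_prod_volume_eq_prod fun ℓ (y : ℝ) =>
    Complex.exp (↑(∑ m ∈ Finset.Iic ℓ, ξ m) * (↑y * I)) * ↑(f ℓ y)

/-- Fourier transform of the chained kernel: for integrable `f₁,…,f_n : ℝ → ℝ`, `x ∈ ℝ`
(with `x_{n+1} := x`) and `(ξ₁,…,ξ_n) ∈ ℝⁿ`,
`∫_{ℝⁿ} e^{-i(ξ₁x₁+⋯+ξ_n x_n)} ∏_ℓ f_ℓ(x_{ℓ+1} - x_ℓ) dx₁⋯dx_n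
  = e^{-i(ξ₁+⋯+ξ_n)x} ∏_ℓ conj(𝓕f_ℓ(ξ₁+⋯+ξ_ℓ))`,
where `𝓕f(ζ) = ∫ e^{-iζy} f(y) dy`. -/
theorem fourier_chained_kernel (n : ℕ) (hn : 1 ≤ n) (f : Fin n → ℝ → ℝ)
    (hf : ∀ ℓ, Integrable (f ℓ)) (x : ℝ) (ξ : Fin n → ℝ) :
    (∫ v : Fin n → ℝ,
        Complex.exp (-(↑(∑ ℓ, ξ ℓ * v ℓ) : ℂ) * Complex.I) *
          ∏ ℓ : Fin n,
            (↑(f ℓ ((if h : (ℓ : ℕ) + 1 < n then v ⟨(ℓ : ℕ) + 1, h⟩ else x) - v ℓ)) : ℂ))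
      = Complex.exp (-(↑(∑ ℓ, ξ ℓ) : ℂ) * ↑x * Complex.I) *
          ∏ ℓ : Fin n,
            (starRingEnd ℂ)
              (∫ y : ℝ,
                Complex.exp (-(↑(∑ m ∈ Finset.Iic ℓ, ξ m) : ℂ) * ↑y * Complex.I) *
                  (↑(f ℓ y) : ℂ)) :=
  fourier_chained_kernel_general n f x ξ
end

section
/- For every H ∈ (0,1), Γ(2H+1)·sin(πH) ≤ 2 (equivalently, the constant c_H = Γ(2H+1)sin(πH)/(2π) satisfies c_H ≤ 1/π). Moreover, for every H ∈ (1/4, 1/2], Γ(2H+1)·sin(πH) ≤ 1 (equivalently, c_H ≤ 1/(2π)). -/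
/-!
`Γ` is log-convex, hence convex, on `(0, ∞)`, so on `[a, b]` it is bounded by `max (Γ a) (Γ b)`.
As `H` ranges over `(0, 1)` (resp. `(1/4, 1/2]`), `2H + 1` stays in `[1, 3]` (resp. `[1, 2]`),
where `Γ ≤ Γ 3 = 2` (resp. `Γ ≤ Γ 2 = 1`); and `0 ≤ sin (πH) ≤ 1`.
-/

open Real Set

lemma Real.Gamma_le_max_of_mem_Icc {a b x : ℝ} (ha : 0 < a) (hx : x ∈ Icc a b) :
    Gamma x ≤ max (Gamma a) (Gamma b) :=
  convexOn_Gamma.le_on_segment ha (ha.trans_le (hx.1.trans hx.2))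
    (segment_eq_Icc (hx.1.trans hx.2) ▸ hx)

lemma Real.Gamma_mul_sin_pi_mul_le {H c : ℝ} (hH : H ∈ Icc 0 1) (hΓ : Gamma (2 * H + 1) ≤ c) :
    Gamma (2 * H + 1) * sin (π * H) ≤ c := by
  have hΓ_pos : 0 < Gamma (2 * H + 1) := Gamma_pos_of_pos (by linarith [hH.1])
  have hsin_nonneg : 0 ≤ sin (π * H) :=
    sin_nonneg_of_nonneg_of_le_pi (by nlinarith [pi_pos, hH.1]) (by nlinarith [pi_pos, hH.2])
  calc Gamma (2 * H + 1) * sin (π * H) ≤ Gamma (2 * H + 1) :=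
        mul_le_of_le_one_right hΓ_pos.le (sin_le_one _)
    _ ≤ c := hΓ

lemma Real.Gamma_three : Gamma 3 = 2 := by
  simp [Gamma_ofNat_eq_factorial, Nat.factorial]

/-- Uniform bounds for the spectral constant: `Γ(2H+1) sin(πH) ≤ 2` for all
`H ∈ (0,1)` (i.e. `c_H ≤ 1/π`), and `Γ(2H+1) sin(πH) ≤ 1` for all
`H ∈ (1/4, 1/2]` (i.e. `c_H ≤ 1/(2π)`). -/
theorem gamma_sin_bounds :
    (∀ H ∈ Set.Ioo (0 : ℝ) 1,
        Real.Gamma (2 * H + 1) * Real.sin (Real.pi * H) ≤ 2) ∧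
    (∀ H ∈ Set.Ioc (1 / 4 : ℝ) (1 / 2),
        Real.Gamma (2 * H + 1) * Real.sin (Real.pi * H) ≤ 1) := by
  constructor
  · rintro H ⟨hH0, hH1⟩
    refine Gamma_mul_sin_pi_mul_le ⟨hH0.le, hH1.le⟩ ?_
    have := Gamma_le_max_of_mem_Icc one_pos (b := 3) (x := 2 * H + 1) ⟨by linarith, by linarith⟩
    simpa [Gamma_three] using this
  · rintro H ⟨hH0, hH1⟩
    refine Gamma_mul_sin_pi_mul_le ⟨by linarith, by linarith⟩ ?_
    have := Gamma_le_max_of_mem_Icc one_pos (b := 2) (x := 2 * H + 1) ⟨by linarith, by linarith⟩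
    simpa [Gamma_two] using this
end
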